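/- arXiv:1610.05547 — 5 statements merged into one kernel-verified Lean document; each statement's English description precedes it below -/
import Mathlib

section
/- Let T : X → X be a continuous map on a compact metric space preserving an ergodic Borel probability measure μ, and let ε > 0. Let v : ℕ × X → ℝ be a superadditive cocycle over T (i.e. v(m+n,x) ≥ v(m,x) + v(n, T^m x) for all m, n, x) such that v(n,·) is continuous for every n and v(n,x)/n → −ε for μ-almost every x. Define G : X → (−∞,∞] by G(x) = sup_{n ≥ 0} v(n,x). Assume (i) v has exponential large deviations: for every ε' > 0 there exists C' > 0 with μ{x : |v(n,x) + nε| ≥ nε'} ≤ C' e^{−n/C'} for all n ≥ 0; and (ii) Birkhoff sums of continuous functions have exponential large deviations. Then for every δ > 0 there exists C > 0 such that for all n ≥ 0, μ{x : #{j ∈ [0, n−1] : G(T^j x) > C} ≥ δn} ≤ C e^{−n/C}. -/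
open MeasureTheory Filter Real Set

set_option maxHeartbeats 2000000




section Det
variable {X : Type*} {T : X → X} {v : ℕ → X → ℝ}

lemma aux_lowM (hsuper : ∀ (m n : ℕ) (x : X), v m x + v n (T^[m] x) ≤ v (m + n) x)
    {M : ℝ} (hM : ∀ y, |v 1 y| ≤ M) :
    ∀ g : ℕ, 1 ≤ g → ∀ y, -(g : ℝ) * M ≤ v g y := by
  intro g
  induction g with
  | zero => omega
  | succ g ih =>
    intro _ y
    rcases Nat.eq_zero_or_pos g with h0 | hpos
    · subst h0
      have := abs_le.1 (hM y)
      simpa using this.1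
    · have h1 := hsuper 1 g y
      have h2 := ih hpos (T^[1] y)
      have h3 := (abs_le.1 (hM y)).1
      have : (1 : ℕ) + g = g + 1 := by omega
      rw [this] at h1
      push_cast
      linarith

lemma aux_gaplb (hsuper : ∀ (m n : ℕ) (x : X), v m x + v n (T^[m] x) ≤ v (m + n) x)
    {ε γ : ℝ} (hεγ : 0 ≤ ε + γ) {K : ℕ} (hK : 1 ≤ K)
    {M : ℝ} (hM0 : 0 ≤ M) (hM : ∀ y, |v 1 y| ≤ M)
    {φ : X → ℝ} (hφ0 : ∀ y, 0 ≤ φ y)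
    (hφ : ∀ y, -(K : ℝ) * (ε + γ) - φ y ≤ v K y) :
    ∀ g : ℕ, 1 ≤ g → ∀ (a : ℕ) (x : X),
      -(ε + γ) * g - (∑ p ∈ Finset.Ico a (a + g), φ (T^[p] x)) - K * M ≤ v g (T^[a] x) := by
  intro g
  induction g using Nat.strong_induction_on with
  | _ g IH =>
  intro hg a x
  have hsum0 : 0 ≤ ∑ p ∈ Finset.Ico a (a + g), φ (T^[p] x) :=
    Finset.sum_nonneg fun i _ => hφ0 _
  by_cases hgK : g < K
  · have h1 : -(g : ℝ) * M ≤ v g (T^[a] x) := aux_lowM hsuper hM g hg _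
    have h2 : (g : ℝ) * M ≤ (K : ℝ) * M := by
      have : (g : ℝ) ≤ K := by exact_mod_cast hgK.le
      exact mul_le_mul_of_nonneg_right this hM0
    have h3 : 0 ≤ (ε + γ) * g := mul_nonneg hεγ (by positivity)
    linarith
  · have hKg : K ≤ g := le_of_not_gt hgK
    have hmem : a ∈ Finset.Ico a (a + K) := Finset.mem_Ico.2 ⟨le_refl _, by omega⟩
    rcases eq_or_lt_of_le hKg with heq | hlt
    · subst heq
      have h1 := hφ (T^[a] x)
      have h2 : φ (T^[a] x) ≤ ∑ p ∈ Finset.Ico a (a + K), φ (T^[p] x) :=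
        Finset.single_le_sum (f := fun p => φ (T^[p] x)) (fun i _ => hφ0 _) hmem
      have h4 : 0 ≤ (K : ℝ) * M := by positivity
      linarith
    · have hsplit := hsuper K (g - K) (T^[a] x)
      have he : K + (g - K) = g := by omega
      rw [he] at hsplit
      have hTz : T^[K] (T^[a] x) = T^[a + K] x := by
        rw [← Function.iterate_add_apply, Nat.add_comm]
      rw [hTz] at hsplit
      have hIH := IH (g - K) (by omega) (by omega) (a + K) x
      have he2 : a + K + (g - K) = a + g := by omega
      rw [he2] at hIH
      have hsum : φ (T^[a] x) + ∑ p ∈ Finset.Ico (a + K) (a + g), φ (T^[p] x)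
          ≤ ∑ p ∈ Finset.Ico a (a + g), φ (T^[p] x) := by
        rw [← Finset.sum_Ico_consecutive (fun p => φ (T^[p] x)) (by omega : a ≤ a + K)
          (by omega : a + K ≤ a + g)]
        have h2 : φ (T^[a] x) ≤ ∑ p ∈ Finset.Ico a (a + K), φ (T^[p] x) :=
          Finset.single_le_sum (f := fun p => φ (T^[p] x)) (fun i _ => hφ0 _) hmem
        linarith
      have hφa := hφ (T^[a] x)
      have hc : ((g - K : ℕ) : ℝ) = (g : ℝ) - K := by
        push_cast [Nat.cast_sub hKg]; ring
      rw [hc] at hIH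
      nlinarith [hIH, hφa, hsplit, hsum]
end Det

open scoped Classical in
lemma aux_mainQ {X : Type*} {T : X → X} {v : ℕ → X → ℝ}
    (hsuper : ∀ (m n : ℕ) (x : X), v m x + v n (T^[m] x) ≤ v (m + n) x)
    {ε γ : ℝ} (hεγ : 0 ≤ ε + γ) {K N : ℕ} (hK : 1 ≤ K) (hN : 1 ≤ N)
    {M : ℝ} (hM0 : 0 ≤ M) (hM : ∀ y, |v 1 y| ≤ M)
    {φ : X → ℝ} (hφ0 : ∀ y, 0 ≤ φ y)
    (hφ : ∀ y, -(K : ℝ) * (ε + γ) - φ y ≤ v K y)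
    (n R : ℕ) (hnR : n ≤ R) (x : X) :
    ∀ d : ℕ, 1 ≤ d → d ≤ R →
      -(ε + γ) * d + (ε + γ) * (({j : ℕ | R - d ≤ j ∧ j < n ∧
            ∃ m : ℕ, N < m ∧ j + m ≤ R ∧ 0 < v m (T^[j] x)}.ncard : ℕ) : ℝ)
        - (∑ p ∈ Finset.Ico (R - d) R, φ (T^[p] x)) - ((K : ℝ) * M / N) * d - K * M
        ≤ v d (T^[R - d] x) := by
  have hconv : ∀ a : ℕ, ({j : ℕ | a ≤ j ∧ j < n ∧
        ∃ m : ℕ, N < m ∧ j + m ≤ R ∧ 0 < v m (T^[j] x)}.ncard : ℕ)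
      = ((Finset.Ico a n).filter
          (fun j => ∃ m : ℕ, N < m ∧ j + m ≤ R ∧ 0 < v m (T^[j] x))).card := by
    intro a
    rw [show {j : ℕ | a ≤ j ∧ j < n ∧ ∃ m : ℕ, N < m ∧ j + m ≤ R ∧ 0 < v m (T^[j] x)}
        = ↑((Finset.Ico a n).filter
          (fun j => ∃ m : ℕ, N < m ∧ j + m ≤ R ∧ 0 < v m (T^[j] x))) from by
      ext j
      simp [Finset.mem_filter, Finset.mem_Ico, and_assoc]]
    exact Set.ncard_coe_finset _
  intro d
  induction d using Nat.strong_induction_on with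
  | _ d IH =>
  intro hd hdR
  set a := R - d with ha
  have haR : a + d = R := by omega
  rw [hconv a]
  set B := (Finset.Ico a n).filter
      (fun j => ∃ m : ℕ, N < m ∧ j + m ≤ R ∧ 0 < v m (T^[j] x)) with hB
  by_cases hne : B.Nonempty
  · have hjmem := B.min'_mem hne
    set j := B.min' hne with hj
    rw [hB, Finset.mem_filter, Finset.mem_Ico] at hjmem
    obtain ⟨⟨haj, hjn⟩, m, hNm, hjmR, hvm⟩ := hjmem
    set a' := j + m with ha'
    set B' := (Finset.Ico a' n).filter
        (fun j => ∃ m : ℕ, N < m ∧ j + m ≤ R ∧ 0 < v m (T^[j] x)) with hB'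
    -- card bound
    have hsub : B ⊆ Finset.Ico j a' ∪ B' := by
      intro j' hj'
      have hjj' : j ≤ j' := B.min'_le j' hj'
      rw [hB, Finset.mem_filter, Finset.mem_Ico] at hj'
      rw [Finset.mem_union, Finset.mem_Ico, hB', Finset.mem_filter, Finset.mem_Ico]
      by_cases h : j' < a'
      · exact Or.inl ⟨hjj', h⟩
      · exact Or.inr ⟨⟨le_of_not_gt h, hj'.1.2⟩, hj'.2⟩
    have hcard : (B.card : ℝ) ≤ m + B'.card := by
      have h1 : B.card ≤ (Finset.Ico j a' ∪ B').card := Finset.card_le_card hsub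
      have h2 := Finset.card_union_le (Finset.Ico j a') B'
      rw [Nat.card_Ico] at h2
      have : B.card ≤ m + B'.card := by omega
      exact_mod_cast this
    -- claim A : bound for v (R - j) (T^[j] x)
    have hclaimA : -(ε + γ) * ((R : ℝ) - j) + (ε + γ) * ((m : ℝ) + B'.card)
        - (∑ p ∈ Finset.Ico a' R, φ (T^[p] x)) - ((K : ℝ) * M / N) * ((R : ℝ) - a') - K * M
        ≤ v (R - j) (T^[j] x) := by
      have hKM : 0 ≤ (K : ℝ) * M := by positivity
      rcases eq_or_lt_of_le hjmR with hR | hR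
      · -- a' = R
        have hm : R - j = m := by omega
        have hBe : B' = ∅ := by
          rw [hB']
          have : Finset.Ico a' n = ∅ := Finset.Ico_eq_empty (by omega)
          rw [this, Finset.filter_empty]
        have hse : Finset.Ico a' R = ∅ := Finset.Ico_eq_empty (by omega)
        rw [hm, hBe, hse]
        simp only [Finset.card_empty, Finset.sum_empty, Nat.cast_zero]
        have hc1 : (R : ℝ) - j = m := by
          have : ((R - j : ℕ) : ℝ) = (R : ℝ) - j := by
            rw [Nat.cast_sub (by omega)]
          rw [← this, hm]
        have hc2 : (R : ℝ) - a' = 0 := by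
          have : (a' : ℝ) = R := by exact_mod_cast congrArg (Nat.cast (R := ℝ)) hR
          linarith
        rw [hc1, hc2]
        ring_nf
        nlinarith [hvm]
      · -- a' < R
        set d' := R - a' with hd'
        have hd'1 : 1 ≤ d' := by omega
        have hd'R : d' ≤ R := by omega
        have hd'd : d' < d := by omega
        have hIH := IH d' hd'd hd'1 hd'R
        have hra' : R - d' = a' := by omega
        rw [hra', hconv a'] at hIH
        have hsplit := hsuper m d' (T^[j] x)
        have hmd' : m + d' = R - j := by omega
        rw [hmd'] at hsplit
        have hT : T^[m] (T^[j] x) = T^[a'] x := by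
          rw [← Function.iterate_add_apply, Nat.add_comm]
        rw [hT] at hsplit
        have hcast1 : ((d' : ℕ) : ℝ) = (R : ℝ) - a' := by
          rw [hd', Nat.cast_sub (by omega)]
        rw [hcast1] at hIH
        have hcast2 : ((R - j : ℕ) : ℝ) = (R : ℝ) - j := by rw [Nat.cast_sub (by omega)]
        have hca' : (a' : ℝ) = (j : ℝ) + m := by exact_mod_cast rfl
        nlinarith [hIH, hsplit, hvm]
    -- now combine with the gap [a, j)
    have hsubR : Finset.Ico a' R ⊆ Finset.Ico j R := by
      apply Finset.Ico_subset_Ico (by omega) (le_refl _)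
    rcases eq_or_lt_of_le haj with haj' | haj'
    · -- j = a
      have hdj : R - j = d := by omega
      rw [hdj] at hclaimA
      have hceq : (j : ℝ) = a := by exact_mod_cast congrArg (Nat.cast (R := ℝ)) haj'.symm
      have hsum : ∑ p ∈ Finset.Ico a' R, φ (T^[p] x) ≤ ∑ p ∈ Finset.Ico a R, φ (T^[p] x) := by
        apply Finset.sum_le_sum_of_subset_of_nonneg
        · exact subset_trans hsubR (Finset.Ico_subset_Ico (by omega) (le_refl _))
        · intro i _ _; exact hφ0 _
      have hbudget : ((K : ℝ) * M / N) * ((R : ℝ) - a') ≤ ((K : ℝ) * M / N) * d := by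
        apply mul_le_mul_of_nonneg_left _ (by positivity)
        have : (a' : ℝ) ≥ a := by
          have : a ≤ a' := by omega
          exact_mod_cast this
        have hcd : (a : ℝ) + d = R := by exact_mod_cast congrArg (Nat.cast (R := ℝ)) haR
        linarith
      have hgain : (ε + γ) * (B.card : ℝ) ≤ (ε + γ) * ((m : ℝ) + B'.card) :=
        mul_le_mul_of_nonneg_left hcard hεγ
      have hcd : (a : ℝ) + d = R := by exact_mod_cast congrArg (Nat.cast (R := ℝ)) haR
      have hja : T^[j] x = T^[a] x := by rw [haj']
      rw [hja] at hclaimA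
      have hKM : 0 ≤ (K : ℝ) * M := by positivity
      nlinarith [hclaimA, hsum, hbudget, hgain]
    · -- j > a
      have hgap := aux_gaplb hsuper hεγ hK hM0 hM hφ0 hφ (j - a) (by omega) a x
      have he3 : a + (j - a) = j := by omega
      rw [he3] at hgap
      have hsplit2 := hsuper (j - a) (R - j) (T^[a] x)
      have he4 : j - a + (R - j) = d := by omega
      rw [he4] at hsplit2
      have hT2 : T^[j - a] (T^[a] x) = T^[j] x := by
        rw [← Function.iterate_add_apply, Nat.sub_add_cancel (by omega)]
      rw [hT2] at hsplit2
      -- sums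
      have hsum : (∑ p ∈ Finset.Ico a j, φ (T^[p] x)) + ∑ p ∈ Finset.Ico a' R, φ (T^[p] x)
          ≤ ∑ p ∈ Finset.Ico a R, φ (T^[p] x) := by
        rw [← Finset.sum_Ico_consecutive (fun p => φ (T^[p] x)) (by omega : a ≤ j)
          (by omega : j ≤ R)]
        have : ∑ p ∈ Finset.Ico a' R, φ (T^[p] x) ≤ ∑ p ∈ Finset.Ico j R, φ (T^[p] x) := by
          apply Finset.sum_le_sum_of_subset_of_nonneg hsubR
          intro i _ _; exact hφ0 _
        linarith
      have hgain : (ε + γ) * (B.card : ℝ) ≤ (ε + γ) * ((m : ℝ) + B'.card) :=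
        mul_le_mul_of_nonneg_left hcard hεγ
      -- budget : KM/N * (R - a') + 2KM ≤ KM/N * d + KM
      have hbudget : ((K : ℝ) * M / N) * ((R : ℝ) - a') + (K : ℝ) * M
          ≤ ((K : ℝ) * M / N) * d := by
        have hcd : (a : ℝ) + d = R := by exact_mod_cast congrArg (Nat.cast (R := ℝ)) haR
        have hca' : (a' : ℝ) = (j : ℝ) + m := by exact_mod_cast rfl
        have hma : (a : ℝ) ≤ j := by exact_mod_cast haj
        have hNm' : (N : ℝ) + 1 ≤ m := by exact_mod_cast hNm
        have hN' : (1 : ℝ) ≤ N := by exact_mod_cast hN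
        have key : (N : ℝ) ≤ (R : ℝ) - a - ((R : ℝ) - a') := by linarith
        have h2 : ((K : ℝ) * M / N) * N = (K : ℝ) * M := by
          field_simp
        nlinarith [mul_le_mul_of_nonneg_left key (show 0 ≤ (K:ℝ)*M/N by positivity)]
      have hcast3 : ((j - a : ℕ) : ℝ) = (j : ℝ) - a := by rw [Nat.cast_sub (by omega)]
      have hcast4 : ((R - j : ℕ) : ℝ)= (R : ℝ) - j := by rw [Nat.cast_sub (by omega)]
      have hcd : (a : ℝ) + d = R := by exact_mod_cast congrArg (Nat.cast (R := ℝ)) haR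
      rw [hcast3] at hgap
      nlinarith [hclaimA, hgap, hsplit2, hsum, hgain, hbudget]
  · -- base case: no bad j
    have hcard : B.card = 0 := by
      rw [Finset.not_nonempty_iff_eq_empty] at hne
      rw [hne, Finset.card_empty]
    have hgap := aux_gaplb hsuper hεγ hK hM0 hM hφ0 hφ d hd a x
    rw [haR] at hgap
    have h5 : 0 ≤ ((K : ℝ) * M / N) * d := by positivity
    rw [hcard]
    simp only [Nat.cast_zero, mul_zero, add_zero]
    linarith

lemma aux_texp {t : ℝ} (ht : 0 ≤ t) : t * Real.exp (-t) ≤ 1 := by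
  have h1 : t ≤ Real.exp t := by linarith [Real.add_one_le_exp t]
  calc t * Real.exp (-t) ≤ Real.exp t * Real.exp (-t) :=
        mul_le_mul_of_nonneg_right h1 (Real.exp_pos _).le
    _ = 1 := by rw [← Real.exp_add]; simp

lemma aux_expquad {t : ℝ} (ht : 0 < t) : Real.exp (-t) ≤ 4 / t ^ 2 := by
  have h1 := Real.add_one_le_exp (t / 2)
  have h2 : Real.exp (t / 2) * Real.exp (t / 2) = Real.exp t := by
    rw [← Real.exp_add]; ring_nf
  have h3 : t ^ 2 / 4 ≤ Real.exp t := by nlinarith [Real.exp_pos (t / 2)]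
  rw [Real.exp_neg]
  have h4 : 0 < t ^ 2 / 4 := by positivity
  calc (Real.exp t)⁻¹ ≤ (t ^ 2 / 4)⁻¹ := by
        apply inv_anti₀ h4 h3
    _ = 4 / t ^ 2 := by field_simp
  
lemma aux_expmono {a a' c : ℝ} (h0 : 0 ≤ a) (h1 : 0 < a') (h2 : a' ≤ c) (h3 : a ≤ c)
    {n : ℝ} (hn : 0 ≤ n) : a * Real.exp (-n / a') ≤ c * Real.exp (-n / c) := by
  have hc : 0 < c := lt_of_lt_of_le h1 h2
  have hd : -n / a' ≤ -n / c := by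
    rw [neg_div, neg_div, neg_le_neg_iff]
    exact div_le_div_of_nonneg_left hn h1 h2
  exact mul_le_mul h3 (Real.exp_le_exp.2 hd) (Real.exp_pos _).le hc.le

lemma aux_huge {X : Type*} [MeasurableSpace X] {T : X → X} (μ : Measure X)
    (hT : MeasurePreserving T μ μ) {v : ℕ → X → ℝ}
    (hmeas : ∀ m, MeasurableSet {y | 0 < v m y})
    {C₂ : ℝ} (hC₂ : 0 < C₂)
    (hbd : ∀ m : ℕ, μ {y | 0 < v m y} ≤ ENNReal.ofReal (C₂ * Real.exp (-(m : ℝ) / C₂)))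
    (n : ℕ) :
    μ {x | ∃ j < n, ∃ m, n < m ∧ 0 < v m (T^[j] x)}
      ≤ ENNReal.ofReal ((n : ℝ) * (C₂ / (1 - Real.exp (-1 / C₂))) * Real.exp (-(n : ℝ) / C₂)) := by
  set r := Real.exp (-1 / C₂) with hrdef
  have hr0 : 0 < r := Real.exp_pos _
  have hr1 : r < 1 := by
    rw [hrdef, Real.exp_lt_one_iff]
    rw [neg_div]
    simp only [Left.neg_neg_iff]
    positivity
  have hsub : {x | ∃ j < n, ∃ m, n < m ∧ 0 < v m (T^[j] x)}
      ⊆ ⋃ (j : Fin n), ⋃ (k : ℕ), T^[(j : ℕ)] ⁻¹' {y | 0 < v (n + 1 + k) y} := by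
    rintro x ⟨j, hj, m, hm, hv⟩
    refine Set.mem_iUnion.2 ⟨⟨j, hj⟩, Set.mem_iUnion.2 ⟨m - (n + 1), ?_⟩⟩
    have : n + 1 + (m - (n + 1)) = m := by omega
    rw [this]
    exact hv
  refine le_trans (measure_mono hsub) ?_
  refine le_trans (measure_iUnion_le _) ?_
  have hinner : ∀ j : Fin n,
      μ (⋃ (k : ℕ), T^[(j : ℕ)] ⁻¹' {y | 0 < v (n + 1 + k) y})
        ≤ ENNReal.ofReal ((C₂ / (1 - r)) * Real.exp (-(n : ℝ) / C₂)) := by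
    intro j
    refine le_trans (measure_iUnion_le _) ?_
    have hpre : ∀ k : ℕ, μ (T^[(j : ℕ)] ⁻¹' {y | 0 < v (n + 1 + k) y})
        = μ {y | 0 < v (n + 1 + k) y} := fun k =>
      (hT.iterate (j : ℕ)).measure_preimage (hmeas (n + 1 + k)).nullMeasurableSet
    have hterm : ∀ k : ℕ, μ (T^[(j : ℕ)] ⁻¹' {y | 0 < v (n + 1 + k) y})
        ≤ ENNReal.ofReal ((C₂ * Real.exp (-((n : ℝ) + 1) / C₂)) * r ^ k) := by
      intro k
      rw [hpre k]
      refine le_trans (hbd (n + 1 + k)) (le_of_eq ?_)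
      congr 1
      rw [mul_assoc]
      congr 1
      rw [hrdef, ← Real.exp_nat_mul, ← Real.exp_add]
      congr 1
      push_cast
      ring
    refine le_trans (ENNReal.tsum_le_tsum hterm) ?_
    rw [← ENNReal.ofReal_tsum_of_nonneg (fun k => by positivity)
      ((summable_geometric_of_lt_one hr0.le hr1).mul_left _)]
    apply ENNReal.ofReal_le_ofReal
    rw [tsum_mul_left, tsum_geometric_of_lt_one hr0.le hr1]
    have h1 : Real.exp (-((n : ℝ) + 1) / C₂) ≤ Real.exp (-(n : ℝ) / C₂) := by
      apply Real.exp_le_exp.2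
      apply (div_le_div_iff_of_pos_right hC₂).2
      linarith
    have hinv : 0 < 1 - r := by linarith
    have heq : C₂ / (1 - r) * Real.exp (-(n : ℝ) / C₂)
        = C₂ * Real.exp (-(n : ℝ) / C₂) * (1 - r)⁻¹ := by ring
    rw [heq]
    exact mul_le_mul_of_nonneg_right (mul_le_mul_of_nonneg_left h1 hC₂.le) (by positivity)
  refine le_trans (ENNReal.tsum_le_tsum hinner) ?_
  rw [tsum_fintype]
  rw [Finset.sum_const, Finset.card_univ, Fintype.card_fin, nsmul_eq_mul]
  rw [← ENNReal.ofReal_natCast n, ← ENNReal.ofReal_mul (by positivity)]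
  apply ENNReal.ofReal_le_ofReal
  rw [mul_assoc]

lemma aux_third {a a' C : ℝ} (h0 : 0 ≤ a) (h1 : 0 < a') (h2 : a' ≤ C / 3) (h3 : a ≤ C / 3)
    {n : ℝ} (hn : 0 ≤ n) : a * Real.exp (-n / a') ≤ C / 3 * Real.exp (-n / C) := by
  have hC : 0 < C / 3 := lt_of_lt_of_le h1 h2
  refine le_trans (aux_expmono h0 h1 h2 h3 hn) ?_
  apply mul_le_mul_of_nonneg_left ?_ hC.le
  apply Real.exp_le_exp.2
  rw [neg_div, neg_div, neg_le_neg_iff]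
  exact div_le_div_of_nonneg_left hn hC (by linarith)


set_option maxHeartbeats 10000000 in
/-- exponential returns to sets where `G(x) = sup_n v(n,x)` is bounded,
for a superadditive cocycle `v` with a.e. drift `-ε` and exponential large deviations,
assuming Birkhoff sums of continuous functions have exponential large deviations. -/
theorem exp_returns_for_superadditive_cocycle
    {X : Type*} [MetricSpace X] [CompactSpace X] [MeasurableSpace X] [BorelSpace X]
    (T : X → X) (hTcont : Continuous T)
    (μ : Measure X) [IsProbabilityMeasure μ] (hErg : Ergodic T μ)
    (ε : ℝ) (hε : 0 < ε)
    (v : ℕ → X → ℝ)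
    (hsuper : ∀ (m n : ℕ) (x : X), v m x + v n (T^[m] x) ≤ v (m + n) x)
    (hcont : ∀ n, Continuous (v n))
    (hae : ∀ᵐ x ∂μ, Tendsto (fun n : ℕ => v n x / n) atTop (nhds (-ε)))
    (G : X → EReal)
    (hG : ∀ x, G x = ⨆ n : ℕ, ((v n x : ℝ) : EReal))
    (hv_ld : ∀ ε' > (0 : ℝ), ∃ C' > (0 : ℝ), ∀ n : ℕ,
      μ {x | (n : ℝ) * ε' ≤ |v n x + n * ε|} ≤ ENNReal.ofReal (C' * Real.exp (-(n : ℝ) / C')))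
    (hbirk : ∀ f : X → ℝ, Continuous f → ∀ ε' > (0 : ℝ), ∃ C > (0 : ℝ), ∀ n : ℕ,
      μ {x | (n : ℝ) * ε' ≤ |(∑ j ∈ Finset.range n, f (T^[j] x)) - n * ∫ y, f y ∂μ|}
        ≤ ENNReal.ofReal (C * Real.exp (-(n : ℝ) / C)))
    (δ : ℝ) (hδ : 0 < δ) :
    ∃ C > (0 : ℝ), ∀ n : ℕ,
      μ {x | δ * n ≤ (({j : ℕ | j < n ∧ (C : EReal) < G (T^[j] x)}).ncard : ℝ)}
        ≤ ENNReal.ofReal (C * Real.exp (-(n : ℝ) / C)) := by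
  classical
  -- X is nonempty
  have hXne : Nonempty X := by
    by_contra h
    rw [not_nonempty_iff] at h
    have h1 : μ Set.univ = 1 := measure_univ
    rw [Set.univ_eq_empty_iff.mpr h, measure_empty] at h1
    exact zero_ne_one h1
  -- uniform bound on |v 1|
  obtain ⟨x₀, -, hMx⟩ := isCompact_univ.exists_isMaxOn Set.univ_nonempty
    ((hcont 1).abs.continuousOn)
  set M := |v 1 x₀| with hMdef
  have hM : ∀ y, |v 1 y| ≤ M := fun y => hMx (Set.mem_univ y)
  have hM0 : 0 ≤ M := abs_nonneg _
  -- v 0 ≤ 0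
  have hv0 : ∀ y, v 0 y ≤ 0 := by
    intro y
    have h := hsuper 0 0 y
    simp only [Function.iterate_zero_apply, Nat.add_zero] at h
    linarith
  -- uniform upper bound for v m, m ≤ Nb
  have hvbound : ∀ Nb : ℕ, ∃ B : ℝ, 0 ≤ B ∧ ∀ m ≤ Nb, ∀ y, v m y ≤ B := by
    intro Nb
    induction Nb with
    | zero =>
      refine ⟨0, le_refl _, fun m hm y => ?_⟩
      have hm0 : m = 0 := by omega
      rw [hm0]; exact hv0 y
    | succ Nb ih =>
      obtain ⟨B, hB0, hB⟩ := ih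
      obtain ⟨z, -, hz⟩ := isCompact_univ.exists_isMaxOn Set.univ_nonempty
        (hcont (Nb + 1)).continuousOn
      refine ⟨max B (v (Nb + 1) z), le_trans hB0 (le_max_left _ _), fun m hm y => ?_⟩
      by_cases hmle : m ≤ Nb
      · exact le_trans (hB m hmle y) (le_max_left _ _)
      · have : m = Nb + 1 := by omega
        rw [this]
        exact le_trans (hz (Set.mem_univ y)) (le_max_right _ _)
  -- constants
  set γ := ε * δ / 100 with hγdef
  have hγ : 0 < γ := by rw [hγdef]; positivity
  have hεγ : (0 : ℝ) ≤ ε + γ := by positivity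
  obtain ⟨C₂, hC₂, hld2⟩ := hv_ld ε hε
  obtain ⟨C₃, hC₃, hld3⟩ := hv_ld γ hγ
  -- choice of K
  set K := max 1 ⌈4 * M * C₃ ^ 3 / γ⌉₊ with hKdef
  have hK1 : 1 ≤ K := le_max_left _ _
  have hK0 : (0 : ℝ) < K := by exact_mod_cast hK1
  have hKbig : 4 * M * C₃ ^ 3 / γ ≤ (K : ℝ) := by
    refine le_trans (Nat.le_ceil _) ?_
    have h2 : (⌈4 * M * C₃ ^ 3 / γ⌉₊ : ℕ) ≤ K := le_max_right _ _
    exact Nat.cast_le.2 h2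
  -- the function φ
  set φ := fun y => max 0 (-(K : ℝ) * (ε + γ) - v K y) with hφdef
  have hφcont : Continuous φ := continuous_const.max (continuous_const.sub (hcont K))
  have hφ0 : ∀ y, 0 ≤ φ y := fun y => le_max_left _ _
  have hφle : ∀ y, -(K : ℝ) * (ε + γ) - φ y ≤ v K y := by
    intro y
    have h := le_max_right (0 : ℝ) (-(K : ℝ) * (ε + γ) - v K y)
    have h2 : φ y = max 0 (-(K : ℝ) * (ε + γ) - v K y) := rfl
    rw [h2]
    linarith
  have hφbd : ∀ y, φ y ≤ (K : ℝ) * M := by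
    intro y
    have h2 : φ y = max 0 (-(K : ℝ) * (ε + γ) - v K y) := rfl
    rw [h2]
    apply max_le (by positivity)
    have h1 := aux_lowM hsuper hM K hK1 y
    nlinarith [mul_nonneg hK0.le hεγ]
  -- integral of φ is at most γ
  have hφint : Integrable φ μ :=
    hφcont.integrable_of_hasCompactSupport (HasCompactSupport.of_compactSpace _)
  have hIφ0 : 0 ≤ ∫ y, φ y ∂μ := integral_nonneg hφ0
  set A := {x | (K : ℝ) * γ ≤ |v K x + (K : ℝ) * ε|} with hAdef
  have hAmeas : MeasurableSet A := by
    have hAc : Continuous fun y => |v K y + (K : ℝ) * ε| :=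
      ((hcont K).add continuous_const).abs
    exact (isClosed_le continuous_const hAc).measurableSet
  have hμA : (μ A).toReal ≤ C₃ * Real.exp (-(K : ℝ) / C₃) := by
    apply ENNReal.toReal_le_of_le_ofReal (by positivity)
    exact hld3 K
  have hIφγ : ∫ y, φ y ∂μ ≤ γ := by
    have hφindic : ∀ y, φ y ≤ A.indicator (fun _ => (K : ℝ) * M) y := by
      intro y
      by_cases hy : y ∈ A
      · rw [Set.indicator_of_mem hy]; exact hφbd y
      · rw [Set.indicator_of_notMem hy]
        have hy' : |v K y + (K : ℝ) * ε| < (K : ℝ) * γ := by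
          rw [hAdef] at hy
          exact not_le.1 hy
        have h3 := (abs_lt.1 hy').1
        have h2 : φ y = max 0 (-(K : ℝ) * (ε + γ) - v K y) := rfl
        rw [h2]
        apply max_le (le_refl _) (by nlinarith)
    have h1 : ∫ y, φ y ∂μ ≤ (μ A).toReal * ((K : ℝ) * M) := by
      have h2 := integral_mono hφint
        ((integrable_const ((K : ℝ) * M)).indicator hAmeas) hφindic
      rwa [integral_indicator_const _ hAmeas, smul_eq_mul] at h2
    have h6 : 4 * M * C₃ ^ 3 / (K : ℝ) ≤ γ := by
      rw [div_le_iff₀ hK0]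
      rw [div_le_iff₀ hγ] at hKbig
      nlinarith
    have h4 : Real.exp (-(K : ℝ) / C₃) ≤ 4 / ((K : ℝ) / C₃) ^ 2 := by
      rw [neg_div]
      exact aux_expquad (by positivity)
    have he : (4 : ℝ) / ((K : ℝ) / C₃) ^ 2 = 4 * C₃ ^ 2 / (K : ℝ) ^ 2 := by
      field_simp
    rw [he] at h4
    have h7 : C₃ * (4 * C₃ ^ 2 / (K : ℝ) ^ 2) * ((K : ℝ) * M) = 4 * M * C₃ ^ 3 / (K : ℝ) := by
      field_simp
    have h8 : (C₃ * Real.exp (-(K : ℝ) / C₃)) * ((K : ℝ) * M)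
        ≤ C₃ * (4 * C₃ ^ 2 / (K : ℝ) ^ 2) * ((K : ℝ) * M) :=
      mul_le_mul_of_nonneg_right (mul_le_mul_of_nonneg_left h4 hC₃.le) (by positivity)
    rw [h7] at h8
    have h3 : (μ A).toReal * ((K : ℝ) * M) ≤ (C₃ * Real.exp (-(K : ℝ) / C₃)) * ((K : ℝ) * M) :=
      mul_le_mul_of_nonneg_right hμA (by positivity)
    linarith
  -- Birkhoff large deviations for φ
  obtain ⟨C₄, hC₄, hbk⟩ := hbirk φ hφcont γ hγ
  -- choice of N
  set N := ⌈(K : ℝ) * M / γ⌉₊ + 1 with hNdef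
  have hN1 : 1 ≤ N := Nat.le_add_left 1 _
  have hNpos : (0 : ℝ) < N := by exact_mod_cast hN1
  have hKMN : (K : ℝ) * M / (N : ℝ) ≤ γ := by
    rw [div_le_iff₀ hNpos]
    have h1 : (K : ℝ) * M / γ ≤ (N : ℝ) := by
      refine le_trans (Nat.le_ceil _) ?_
      rw [hNdef]
      push_cast
      linarith
    rw [div_le_iff₀ hγ] at h1
    nlinarith
  obtain ⟨CN, hCN0, hCNb⟩ := hvbound N
  set n₀ := ⌈2 * (K : ℝ) * M / (ε * δ)⌉₊ + 1 with hn₀def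
  -- geometric series constant
  set c' := C₂ / (1 - Real.exp (-1 / C₂)) with hc'def
  have hr1 : Real.exp (-1 / C₂) < 1 := by
    rw [Real.exp_lt_one_iff, neg_div]
    have : (0 : ℝ) < 1 / C₂ := by positivity
    linarith
  have hc'0 : 0 < c' := by
    rw [hc'def]
    exact div_pos hC₂ (by linarith)
  -- the final constant
  set CC := max (max (6 * C₂ * c' + 6 * C₂) (3 * C₃ + 3 * C₄ + 3))
      (max (CN + 3) ((n₀ : ℝ) + 3)) with hCCdef
  have hCC_CN : CN + 3 ≤ CC := le_trans (le_max_left _ _) (le_max_right _ _)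
  have hCC_n₀ : (n₀ : ℝ) + 3 ≤ CC := le_trans (le_max_right _ _) (le_max_right _ _)
  have hCC3 : 3 ≤ CC := by linarith [hCN0]
  have hCCpos : (0 : ℝ) < CC := by linarith
  have hCC_1 : 6 * C₂ * c' + 6 * C₂ ≤ CC := le_trans (le_max_left _ _) (le_max_left _ _)
  have hCC_2 : 3 * C₃ + 3 * C₄ + 3 ≤ CC := le_trans (le_max_right _ _) (le_max_left _ _)
  refine ⟨CC, hCCpos, fun n => ?_⟩
  by_cases hn : n < n₀
  · -- small n : trivial bound
    refine le_trans prob_le_one ?_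
    rw [← ENNReal.ofReal_one]
    apply ENNReal.ofReal_le_ofReal
    have hnC : -(1 : ℝ) ≤ -(n : ℝ) / CC := by
      rw [neg_div, neg_le_neg_iff, div_le_one hCCpos]
      have h1 : (n : ℝ) ≤ n₀ := by exact_mod_cast hn.le
      linarith
    have he : Real.exp (-1) ≤ Real.exp (-(n : ℝ) / CC) := Real.exp_le_exp.2 hnC
    have he1 : (3 : ℝ)⁻¹ ≤ Real.exp (-1) := by
      rw [Real.exp_neg]
      apply inv_anti₀ (Real.exp_pos 1)
      linarith [Real.exp_one_lt_d9]
    nlinarith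
  · -- large n
    push_neg at hn
    have hn₀1 : 1 ≤ n₀ := by rw [hn₀def]; omega
    have hn1 : 1 ≤ n := le_trans hn₀1 hn
    have hn1' : (1 : ℝ) ≤ n := by exact_mod_cast hn1
    -- the three exceptional events
    set Ehuge := {x | ∃ j < n, ∃ m, n < m ∧ 0 < v m (T^[j] x)} with hEh
    set Ev := {x | ((2 * n : ℕ) : ℝ) * γ ≤ |v (2 * n) x + ((2 * n : ℕ) : ℝ) * ε|} with hEv
    set Eφ := {x | ((2 * n : ℕ) : ℝ) * γ ≤
        |(∑ j ∈ Finset.range (2 * n), φ (T^[j] x)) - ((2 * n : ℕ) : ℝ) * ∫ y, φ y ∂μ|} with hEφ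
    -- inclusion of the target event into the union
    have hsubset : {x | δ * n ≤ (({j : ℕ | j < n ∧ (CC : EReal) < G (T^[j] x)}).ncard : ℝ)}
        ⊆ Ehuge ∪ (Ev ∪ Eφ) := by
      intro x hx
      by_contra hout
      have hxh : x ∉ Ehuge := fun h => hout (Set.mem_union_left _ h)
      have hxv : x ∉ Ev := fun h => hout (Set.mem_union_right _ (Set.mem_union_left _ h))
      have hxφ : x ∉ Eφ := fun h => hout (Set.mem_union_right _ (Set.mem_union_right _ h))
      rw [Set.mem_setOf_eq] at hx
      -- the count is bounded by the number of bad indices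
      have hcsub : {j : ℕ | j < n ∧ (CC : EReal) < G (T^[j] x)}
          ⊆ {j : ℕ | 0 ≤ j ∧ j < n ∧ ∃ m : ℕ, N < m ∧ j + m ≤ 2 * n ∧ 0 < v m (T^[j] x)} := by
        rintro j ⟨hjn, hjG⟩
        rw [hG] at hjG
        obtain ⟨m, hm⟩ := lt_iSup_iff.1 hjG
        have hCm : CC < v m (T^[j] x) := EReal.coe_lt_coe_iff.1 hm
        have hvpos : 0 < v m (T^[j] x) := by linarith
        have hmN : N < m := by
          by_contra hmN'
          push_neg at hmN'
          have h1 := hCNb m hmN' (T^[j] x)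
          linarith
        have hm2n : j + m ≤ 2 * n := by
          by_contra h2
          push_neg at h2
          exact hxh ⟨j, hjn, m, by omega, hvpos⟩
        exact ⟨Nat.zero_le j, hjn, m, hmN, hm2n, hvpos⟩
      have hfin : ({j : ℕ | 0 ≤ j ∧ j < n ∧
          ∃ m : ℕ, N < m ∧ j + m ≤ 2 * n ∧ 0 < v m (T^[j] x)}).Finite :=
        (Set.finite_Iio n).subset (fun j hj => hj.2.1)
      have hcount : (({j : ℕ | j < n ∧ (CC : EReal) < G (T^[j] x)}).ncard : ℝ)
          ≤ (({j : ℕ | 0 ≤ j ∧ j < n ∧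
              ∃ m : ℕ, N < m ∧ j + m ≤ 2 * n ∧ 0 < v m (T^[j] x)}).ncard : ℝ) := by
        exact_mod_cast Set.ncard_le_ncard hcsub hfin
      -- the key superadditivity estimate
      have hQ := aux_mainQ hsuper hεγ hK1 hN1 hM0 hM hφ0 hφle n (2 * n)
        (by omega) x (2 * n) (by omega) (le_refl _)
      rw [Nat.sub_self] at hQ
      simp only [Function.iterate_zero_apply] at hQ
      rw [← Finset.range_eq_Ico] at hQ
      -- numeric facts from the complement of the events
      have hxv' : |v (2 * n) x + ((2 * n : ℕ) : ℝ) * ε| < ((2 * n : ℕ) : ℝ) * γ := by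
        rw [hEv, Set.mem_setOf_eq] at hxv
        exact not_le.1 hxv
      have hxφ' : |(∑ j ∈ Finset.range (2 * n), φ (T^[j] x)) - ((2 * n : ℕ) : ℝ) * ∫ y, φ y ∂μ|
          < ((2 * n : ℕ) : ℝ) * γ := by
        rw [hEφ, Set.mem_setOf_eq] at hxφ
        exact not_le.1 hxφ
      have hv2n : v (2 * n) x < -(((2 * n : ℕ) : ℝ)) * ε + ((2 * n : ℕ) : ℝ) * γ := by
        have := (abs_lt.1 hxv').2
        linarith
      have hS : (∑ j ∈ Finset.range (2 * n), φ (T^[j] x))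
          < ((2 * n : ℕ) : ℝ) * γ + ((2 * n : ℕ) : ℝ) * γ := by
        have h1 := (abs_lt.1 hxφ').2
        have h2 : ((2 * n : ℕ) : ℝ) * ∫ y, φ y ∂μ ≤ ((2 * n : ℕ) : ℝ) * γ := by
          apply mul_le_mul_of_nonneg_left hIφγ (by positivity)
        linarith
      -- cast bookkeeping
      have hc2n : ((2 * n : ℕ) : ℝ) = 2 * (n : ℝ) := by push_cast; ring
      set b := (({j : ℕ | 0 ≤ j ∧ j < n ∧
          ∃ m : ℕ, N < m ∧ j + m ≤ 2 * n ∧ 0 < v m (T^[j] x)}).ncard : ℝ) with hbdef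
      -- from hQ and the above bounds
      have hKM2n : ((K : ℝ) * M / N) * ((2 * n : ℕ) : ℝ) ≤ γ * ((2 * n : ℕ) : ℝ) := by
        apply mul_le_mul_of_nonneg_right hKMN (by positivity)
      have hbound : (ε + γ) * b ≤ 10 * (n : ℝ) * γ + (K : ℝ) * M := by
        rw [hc2n] at hQ hv2n hS hKM2n
        nlinarith [hQ, hv2n, hS, hKM2n]
      -- n is large
      have hnbig : 2 * (K : ℝ) * M / (ε * δ) ≤ (n : ℝ) := by
        refine le_trans (Nat.le_ceil _) ?_
        have h1 : (⌈2 * (K : ℝ) * M / (ε * δ)⌉₊ : ℝ) ≤ ((n₀ : ℕ) : ℝ) := by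
          rw [hn₀def]; push_cast; linarith
        refine le_trans h1 ?_
        exact_mod_cast hn
      have hKMn : (K : ℝ) * M ≤ (n : ℝ) * ε * δ / 2 := by
        rw [div_le_iff₀ (by positivity : (0:ℝ) < ε * δ)] at hnbig
        nlinarith
      have hγval : γ = ε * δ / 100 := hγdef
      -- contradiction
      have hb1 : (ε + γ) * (δ * (n : ℝ)) ≤ (ε + γ) * b := by
        apply mul_le_mul_of_nonneg_left (le_trans hx hcount) hεγ
      nlinarith [hb1, hbound, hKMn, mul_pos hε hδ, hn1']
    -- measure estimates
    refine le_trans (measure_mono hsubset) ?_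
    refine le_trans (measure_union_le _ _) ?_
    refine le_trans (add_le_add_right (measure_union_le _ _) _) ?_
    have hbdall : ∀ m : ℕ, μ {y | 0 < v m y} ≤ ENNReal.ofReal (C₂ * Real.exp (-(m : ℝ) / C₂)) := by
      intro m
      refine le_trans (measure_mono ?_) (hld2 m)
      intro y hy
      rw [Set.mem_setOf_eq] at hy ⊢
      have h1 : (m : ℝ) * ε ≤ v m y + (m : ℝ) * ε := by linarith
      exact le_trans h1 (le_abs_self _)
    have hEhb := aux_huge μ hErg.toMeasurePreserving
      (fun m => (isOpen_lt continuous_const (hcont m)).measurableSet) hC₂ hbdall n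
    have hEvb := hld3 (2 * n)
    have hEφb := hbk (2 * n)
    -- each term is at most (CC/3) * exp(-n/CC)
    have hn0' : (0 : ℝ) ≤ (n : ℝ) := by positivity
    have hT1 : (n : ℝ) * c' * Real.exp (-(n : ℝ) / C₂)
        ≤ CC / 3 * Real.exp (-(n : ℝ) / CC) := by
      have hsplit : Real.exp (-(n : ℝ) / C₂)
          = Real.exp (-(n : ℝ) / (2 * C₂)) * Real.exp (-(n : ℝ) / (2 * C₂)) := by
        rw [← Real.exp_add]
        congr 1
        field_simp
        ring
      set E2 := Real.exp (-(n : ℝ) / (2 * C₂)) with hE2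
      have hE2pos : 0 < E2 := Real.exp_pos _
      have hne : (n : ℝ) * E2 ≤ 2 * C₂ := by
        have ht := aux_texp (t := (n : ℝ) / (2 * C₂)) (by positivity)
        have he : -((n : ℝ) / (2 * C₂)) = -(n : ℝ) / (2 * C₂) := by ring
        rw [he, ← hE2] at ht
        have h2 : (n : ℝ) * E2 = (2 * C₂) * ((n : ℝ) / (2 * C₂) * E2) := by
          field_simp
        rw [h2]
        calc (2 * C₂) * ((n : ℝ) / (2 * C₂) * E2) ≤ (2 * C₂) * 1 :=
              mul_le_mul_of_nonneg_left ht (by positivity)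
          _ = 2 * C₂ := mul_one _
      have h3 : (n : ℝ) * c' * Real.exp (-(n : ℝ) / C₂) ≤ (2 * C₂ * c') * E2 := by
        rw [hsplit]
        calc (n : ℝ) * c' * (E2 * E2) = ((n : ℝ) * E2) * E2 * c' := by ring
          _ ≤ (2 * C₂) * E2 * c' := by
              apply mul_le_mul_of_nonneg_right
                (mul_le_mul_of_nonneg_right hne hE2pos.le) hc'0.le
          _ = (2 * C₂ * c') * E2 := by ring
      refine le_trans h3 ?_
      have h4 : 2 * C₂ * c' ≤ CC / 3 := by linarith [hc'0, hC₂, hCC_1]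
      have h5 : 2 * C₂ ≤ CC / 3 := by nlinarith [hc'0, hC₂, hCC_1]
      exact aux_third (by positivity) (by positivity) h5 h4 hn0'
    have hT2 : C₃ * Real.exp (-((2 * n : ℕ) : ℝ) / C₃) ≤ CC / 3 * Real.exp (-(n : ℝ) / CC) := by
      have h1 : Real.exp (-((2 * n : ℕ) : ℝ) / C₃) ≤ Real.exp (-(n : ℝ) / C₃) := by
        apply Real.exp_le_exp.2
        rw [neg_div, neg_div, neg_le_neg_iff]
        apply (div_le_div_iff_of_pos_right hC₃).2
        push_cast; linarith
      refine le_trans (mul_le_mul_of_nonneg_left h1 hC₃.le) ?_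
      exact aux_third hC₃.le hC₃ (by linarith [hC₄]) (by linarith [hC₄]) hn0'
    have hT3 : C₄ * Real.exp (-((2 * n : ℕ) : ℝ) / C₄) ≤ CC / 3 * Real.exp (-(n : ℝ) / CC) := by
      have h1 : Real.exp (-((2 * n : ℕ) : ℝ) / C₄) ≤ Real.exp (-(n : ℝ) / C₄) := by
        apply Real.exp_le_exp.2
        rw [neg_div, neg_div, neg_le_neg_iff]
        apply (div_le_div_iff_of_pos_right hC₄).2
        push_cast; linarith
      refine le_trans (mul_le_mul_of_nonneg_left h1 hC₄.le) ?_
      exact aux_third hC₄.le hC₄ (by linarith [hC₃]) (by linarith [hC₃]) hn0'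
    have hsum : ENNReal.ofReal ((n : ℝ) * c' * Real.exp (-(n : ℝ) / C₂))
        + (ENNReal.ofReal (C₃ * Real.exp (-((2 * n : ℕ) : ℝ) / C₃))
          + ENNReal.ofReal (C₄ * Real.exp (-((2 * n : ℕ) : ℝ) / C₄)))
        ≤ ENNReal.ofReal (CC * Real.exp (-(n : ℝ) / CC)) := by
      rw [← ENNReal.ofReal_add (by positivity) (by positivity),
        ← ENNReal.ofReal_add (by positivity) (by positivity)]
      apply ENNReal.ofReal_le_ofReal
      have : CC * Real.exp (-(n : ℝ) / CC)
          = CC / 3 * Real.exp (-(n : ℝ) / CC) + (CC / 3 * Real.exp (-(n : ℝ) / CC)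
            + CC / 3 * Real.exp (-(n : ℝ) / CC)) := by ring
      rw [this]
      exact add_le_add hT1 (add_le_add hT2 hT3)
    refine le_trans (add_le_add ?_ (add_le_add ?_ ?_)) hsum
    · rw [← hc'def] at hEhb
      exact hEhb
    · exact hEvb
    · exact hEφb
end

section
/- Let T : X → X be a continuous map on a compact metric space preserving an ergodic Borel probability measure μ, and assume that Birkhoff sums of continuous functions have exponential large deviations. Let a : ℕ × X → ℝ be a subadditive cocycle over T such that a(n,·) is continuous for every n, and let λ ∈ ℝ be such that a(n,x)/n → λ for μ-almost every x. Then for every ε > 0 there exists C > 0 such that for all n ≥ 0, μ{x : a(n,x) ≥ nλ + nε} ≤ C e^{−n/C}. -/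
open MeasureTheory Filter Real Set

lemma sld_blocks {X : Type*} (T : X → X) (a : ℕ → X → ℝ)
    (hsub : ∀ (m n : ℕ) (x : X), a (m + n) x ≤ a m x + a n (T^[m] x))
    (k : ℕ) : ∀ q : ℕ, 1 ≤ q → ∀ x : X,
      a (q * k) x ≤ ∑ i ∈ Finset.range q, a k (T^[i * k] x) := by
  intro q hq
  induction q, hq using Nat.le_induction with
  | base => intro x; simp
  | succ q hq ih =>
    intro x
    have h1 : a ((q + 1) * k) x ≤ a (q * k) x + a k (T^[q * k] x) := by
      have := hsub (q * k) k x
      simpa [add_mul, one_mul] using this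
    rw [Finset.sum_range_succ]
    exact h1.trans (add_le_add_left (ih x) _)

lemma sld_key {X : Type*} (T : X → X) (a : ℕ → X → ℝ)
    (hsub : ∀ (m n : ℕ) (x : X), a (m + n) x ≤ a m x + a n (T^[m] x))
    (k : ℕ) (hk : 1 ≤ k) (B : ℝ) (hB : 0 ≤ B)
    (hbd : ∀ m ≤ k, ∀ x, |a m x| ≤ B) :
    ∀ (n : ℕ) (x : X),
      (k : ℝ) * a n x ≤ (∑ j ∈ Finset.range n, a k (T^[j] x)) + 4 * k * B := by
  intro n x
  have hkR : (0:ℝ) < k := by exact_mod_cast hk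
  -- generic lower bound for sums of a k over any finset
  have hlow : ∀ s : Finset ℕ, -((s.card : ℝ) * B) ≤ ∑ j ∈ s, a k (T^[j] x) := by
    intro s
    have : ∑ j ∈ s, (-B) ≤ ∑ j ∈ s, a k (T^[j] x) :=
      Finset.sum_le_sum fun j _ => neg_le_of_abs_le (hbd k le_rfl _)
    simpa [mul_comm] using this
  by_cases hn : 2 * k ≤ n
  · set q : ℕ → ℕ := fun r => (n - r) / k with hqdef
    have hper : ∀ r < k, a n x ≤ 2 * B + ∑ i ∈ Finset.range (q r), a k (T^[i * k + r] x) := by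
      intro r hr
      have hrn : r ≤ n := by omega
      have hdm := Nat.div_add_mod (n - r) k
      have hmod : (n - r) % k < k := Nat.mod_lt _ (by omega)
      have h1 : a n x ≤ a r x + a (n - r) (T^[r] x) := by
        have := hsub r (n - r) x
        rwa [show r + (n - r) = n by omega] at this
      have h2 : a (n - r) (T^[r] x) ≤ a (q r * k) (T^[r] x)
          + a ((n - r) % k) (T^[q r * k] (T^[r] x)) := by
        have := hsub (q r * k) ((n - r) % k) (T^[r] x)
        rwa [show q r * k + (n - r) % k = n - r by rw [hqdef, mul_comm]; exact Nat.div_add_mod _ _] at this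
      have hq1 : 1 ≤ q r := by
        rw [hqdef]
        exact (Nat.one_le_div_iff (by omega)).mpr (by omega)
      have h3 : a (q r * k) (T^[r] x) ≤ ∑ i ∈ Finset.range (q r), a k (T^[i * k + r] x) := by
        have := sld_blocks T a hsub k (q r) hq1 (T^[r] x)
        refine this.trans (le_of_eq (Finset.sum_congr rfl fun i _ => ?_))
        rw [Function.iterate_add_apply]
      have h4 : a r x ≤ B := le_of_abs_le (hbd r (by omega) x)
      have h5 : a ((n - r) % k) (T^[q r * k] (T^[r] x)) ≤ B :=
        le_of_abs_le (hbd _ (by omega) _)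
      linarith
    -- the index set
    set S : Finset ℕ :=
      (Finset.range k).biUnion (fun r => (Finset.range (q r)).image (fun i => i * k + r))
      with hSdef
    have hinj : ∀ r, Function.Injective (fun i : ℕ => i * k + r) := by
      intro r i j hij
      simp only at hij
      have : i * k = j * k := by omega
      exact Nat.eq_of_mul_eq_mul_right (by omega) this
    have hdisj : ∀ r ∈ Finset.range k, ∀ r' ∈ Finset.range k, r ≠ r' →
        Disjoint ((Finset.range (q r)).image (fun i => i * k + r))
          ((Finset.range (q r')).image (fun i => i * k + r')) := by
      intro r hr r' hr' hne
      simp only [Finset.mem_range] at hr hr'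
      rw [Finset.disjoint_left]
      rintro j hj hj'
      simp only [Finset.mem_image, Finset.mem_range] at hj hj'
      obtain ⟨i, _, rfl⟩ := hj
      obtain ⟨i', _, h⟩ := hj'
      have h1 : (i * k + r) % k = r := Nat.mul_add_mod_of_lt hr
      have h2 : (i' * k + r') % k = r' := Nat.mul_add_mod_of_lt hr'
      rw [h] at h2
      exact hne (h1 ▸ h2.symm ▸ rfl)
    -- S is contained in range n
    have hS : S ⊆ Finset.range n := by
      intro j hj
      simp only [hSdef, Finset.mem_biUnion, Finset.mem_image, Finset.mem_range] at hj
      obtain ⟨r, hr, i, hi, rfl⟩ := hj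
      have h1 : (i + 1) * k ≤ q r * k := Nat.mul_le_mul_right _ (by omega)
      have h2 : q r * k ≤ n - r := Nat.div_mul_le_self _ _
      simp only [Finset.mem_range]
      have : (i + 1) * k = i * k + k := by ring
      omega
    -- cardinality of S
    have hcardS : n ≤ S.card + 2 * k := by
      have hcard : S.card = ∑ r ∈ Finset.range k, q r := by
        rw [hSdef, Finset.card_biUnion hdisj]
        refine Finset.sum_congr rfl fun r _ => ?_
        rw [Finset.card_image_of_injective _ (hinj r), Finset.card_range]
      have h5 : ∀ r ∈ Finset.range k, n ≤ q r * k + 2 * k := by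
        intro r hr
        simp only [Finset.mem_range] at hr
        have hdm := Nat.div_add_mod (n - r) k
        have hmod : (n - r) % k < k := Nat.mod_lt _ (by omega)
        have : q r * k = k * ((n - r) / k) := by rw [hqdef]; ring
        omega
      have h6 : k * n ≤ (∑ r ∈ Finset.range k, q r) * k + 2 * k * k := by
        calc k * n = ∑ r ∈ Finset.range k, n := by
              simp [Finset.sum_const, Finset.card_range]
          _ ≤ ∑ r ∈ Finset.range k, (q r * k + 2 * k) := Finset.sum_le_sum h5
          _ = (∑ r ∈ Finset.range k, q r) * k + 2 * k * k := by
              rw [Finset.sum_add_distrib, ← Finset.sum_mul]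
              simp [Finset.sum_const, Finset.card_range]; ring
      have h7 : k * n ≤ k * (S.card + 2 * k) := by
        rw [hcard]; calc k * n ≤ (∑ r ∈ Finset.range k, q r) * k + 2 * k * k := h6
          _ = k * ((∑ r ∈ Finset.range k, q r) + 2 * k) := by ring
      exact Nat.le_of_mul_le_mul_left h7 (by omega)
    -- sum over S vs sum over range n
    have hsumS : ∑ j ∈ S, a k (T^[j] x) ≤ (∑ j ∈ Finset.range n, a k (T^[j] x)) + 2 * k * B := by
      have hsd := Finset.sum_sdiff (f := fun j => a k (T^[j] x)) hS
      have hcd : ((Finset.range n \ S).card : ℝ) ≤ 2 * k := by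
        have : (Finset.range n \ S).card = n - S.card := by
          rw [Finset.card_sdiff_of_subset hS, Finset.card_range]
        rw [this]
        have : n - S.card ≤ 2 * k := by omega
        exact_mod_cast this
      have := hlow (Finset.range n \ S)
      have hBc : ((Finset.range n \ S).card : ℝ) * B ≤ 2 * k * B :=
        mul_le_mul_of_nonneg_right hcd hB
      linarith
    -- sum the per-residue bounds
    have hsum : (k : ℝ) * a n x ≤ 2 * k * B + ∑ j ∈ S, a k (T^[j] x) := by
      have h1 : ∑ r ∈ Finset.range k, a n x
          ≤ ∑ r ∈ Finset.range k, (2 * B + ∑ i ∈ Finset.range (q r), a k (T^[i * k + r] x)) :=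
        Finset.sum_le_sum fun r hr => hper r (Finset.mem_range.mp hr)
      have h2 : ∑ j ∈ S, a k (T^[j] x)
          = ∑ r ∈ Finset.range k, ∑ i ∈ Finset.range (q r), a k (T^[i * k + r] x) := by
        rw [hSdef, Finset.sum_biUnion hdisj]
        refine Finset.sum_congr rfl fun r _ => ?_
        rw [Finset.sum_image (fun i _ j _ h => hinj r h)]
      have h3 : ∑ r ∈ Finset.range k, a n x = (k : ℝ) * a n x := by
        simp [Finset.sum_const, Finset.card_range, mul_comm]
      have h4 : ∑ r ∈ Finset.range k, (2 * B + ∑ i ∈ Finset.range (q r), a k (T^[i * k + r] x))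
          = 2 * k * B + ∑ r ∈ Finset.range k, ∑ i ∈ Finset.range (q r), a k (T^[i * k + r] x) := by
        rw [Finset.sum_add_distrib]
        simp [Finset.sum_const, Finset.card_range]; ring
      rw [h3, h4] at h1
      rw [h2]
      exact h1
    linarith
  · -- small n : n < 2 * k
    push_neg at hn
    have hax : a n x ≤ 2 * B := by
      by_cases hnk : n ≤ k
      · linarith [le_of_abs_le (hbd n hnk x), hB]
      · push_neg at hnk
        have h1 : a n x ≤ a k x + a (n - k) (T^[k] x) := by
          have := hsub k (n - k) x
          rwa [show k + (n - k) = n by omega] at this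
        have := le_of_abs_le (hbd k le_rfl x)
        have := le_of_abs_le (hbd (n - k) (by omega) (T^[k] x))
        linarith
    have h1 := hlow (Finset.range n)
    rw [Finset.card_range] at h1
    have hnB : (n : ℝ) * B ≤ 2 * k * B := by
      have : (n : ℝ) ≤ 2 * k := by exact_mod_cast hn.le
      nlinarith
    nlinarith

lemma sld_exists_good_k {X : Type*} [MetricSpace X] [CompactSpace X] [MeasurableSpace X]
    [BorelSpace X] (T : X → X)
    (μ : Measure X) [IsProbabilityMeasure μ]
    (a : ℕ → X → ℝ)
    (hsub : ∀ (m n : ℕ) (x : X), a (m + n) x ≤ a m x + a n (T^[m] x))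
    (hcont : ∀ n, Continuous (a n)) (lam : ℝ)
    (hae : ∀ᵐ x ∂μ, Tendsto (fun n : ℕ => a n x / n) atTop (nhds lam))
    (δ : ℝ) (hδ : 0 < δ) :
    ∃ k : ℕ, 1 ≤ k ∧ (∫ x, a k x ∂μ) / k ≤ lam + δ := by
  have hNe : Nonempty X := by
    by_contra h
    rw [not_nonempty_iff] at h
    have h1 : μ Set.univ = 1 := measure_univ
    rw [Set.univ_eq_empty_iff.mpr h, measure_empty] at h1
    exact zero_ne_one h1
  -- bound for |a 1|
  obtain ⟨x₀, -, hx₀⟩ := IsCompact.exists_isMaxOn isCompact_univ Set.univ_nonempty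
    (hcont 1).abs.continuousOn
  set M : ℝ := |a 1 x₀| with hM
  have hM0 : 0 ≤ M := abs_nonneg _
  have hbd1 : ∀ x, a 1 x ≤ M := fun x => le_of_abs_le (hx₀ (Set.mem_univ x))
  -- linear upper bound
  have hup : ∀ n : ℕ, 1 ≤ n → ∀ x, a n x ≤ n * M := by
    intro n hn
    induction n, hn using Nat.le_induction with
    | base => intro x; simpa using hbd1 x
    | succ n hn ih =>
      intro x
      have h1 : a (n + 1) x ≤ a n x + a 1 (T^[n] x) := hsub n 1 x
      have := ih x
      have := hbd1 (T^[n] x)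
      push_cast
      linarith
  have hdivle : ∀ (n : ℕ) (x : X), a n x / n ≤ M := by
    intro n x
    rcases Nat.eq_zero_or_pos n with h | h
    · simp [h, hM0]
    · rw [div_le_iff₀ (by exact_mod_cast h)]
      calc a n x ≤ n * M := hup n h x
        _ = M * n := by ring
  -- integrability
  have hint : ∀ n, Integrable (a n) μ := by
    intro n
    have := ((hcont n).continuousOn (s := Set.univ)).integrableOn_compact isCompact_univ (μ := μ)
    rwa [integrableOn_univ] at this
  -- Fatou setup
  set g : ℕ → X → ENNReal := fun n x => ENNReal.ofReal (M - a n x / n) with hg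
  have hg_meas : ∀ n, Measurable (g n) := fun n =>
    ENNReal.measurable_ofReal.comp (continuous_const.sub ((hcont n).div_const _)).measurable
  have key : ENNReal.ofReal (M - lam) ≤ liminf (fun n => ∫⁻ x, g n x ∂μ) atTop := by
    have hae2 : ∀ᵐ x ∂μ, liminf (fun n => g n x) atTop = ENNReal.ofReal (M - lam) := by
      filter_upwards [hae] with x hx
      have : Tendsto (fun n => g n x) atTop (nhds (ENNReal.ofReal (M - lam))) :=
        (ENNReal.continuous_ofReal.tendsto _).comp (tendsto_const_nhds.sub hx)
      exact this.liminf_eq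
    calc ENNReal.ofReal (M - lam) = ∫⁻ _, ENNReal.ofReal (M - lam) ∂μ := by
          simp [lintegral_const, measure_univ]
      _ = ∫⁻ x, liminf (fun n => g n x) atTop ∂μ := (lintegral_congr_ae hae2).symm
      _ ≤ liminf (fun n => ∫⁻ x, g n x ∂μ) atTop := lintegral_liminf_le hg_meas
  have heval : ∀ n : ℕ, ∫⁻ x, g n x ∂μ = ENNReal.ofReal (M - (∫ x, a n x ∂μ) / n) := by
    intro n
    have hint2 : Integrable (fun x => M - a n x / (n : ℝ)) μ :=
      (integrable_const M).sub ((hint n).div_const _)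
    rw [hg, ← ofReal_integral_eq_lintegral_ofReal hint2
      (Eventually.of_forall fun x => by simpa using hdivle n x)]
    congr 1
    rw [integral_sub (integrable_const M) ((hint n).div_const _), integral_const, integral_div]

    simp [measure_univ]
  by_contra hcon
  push_neg at hcon
  have hintle : ∀ n : ℕ, 1 ≤ n → (∫ x, a n x ∂μ) / n ≤ M := by
    intro n hn
    have h1 : ∫ x, a n x ∂μ ≤ ∫ _, (n : ℝ) * M ∂μ :=
      integral_mono (hint n) (integrable_const _) (hup n hn)
    rw [integral_const] at h1
    simp only [measure_univ, probReal_univ, ENNReal.toReal_one, smul_eq_mul, one_mul] at h1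
    rw [div_le_iff₀ (by exact_mod_cast hn)]
    calc ∫ x, a n x ∂μ ≤ (n : ℝ) * M := h1
      _ = M * n := by ring
  have hlamM : lam + δ ≤ M := le_trans (hcon 1 le_rfl).le (by simpa using hintle 1 le_rfl)
  have hub : ∀ᶠ n : ℕ in atTop, ∫⁻ x, g n x ∂μ ≤ ENNReal.ofReal (M - lam - δ) := by
    filter_upwards [eventually_ge_atTop 1] with n hn
    rw [heval n]
    exact ENNReal.ofReal_le_ofReal (by linarith [hcon n hn])
  have hliminf_le : liminf (fun n => ∫⁻ x, g n x ∂μ) atTop ≤ ENNReal.ofReal (M - lam - δ) := by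
    have := Filter.liminf_le_liminf hub
    simpa [liminf_const] using this
  have hlt : ENNReal.ofReal (M - lam - δ) < ENNReal.ofReal (M - lam) :=
    (ENNReal.ofReal_lt_ofReal_iff (by linarith)).mpr (by linarith)
  exact absurd (key.trans hliminf_le) hlt.not_ge

/-- upper exponential large deviations for continuous subadditive cocycles,
assuming Birkhoff sums of continuous functions have exponential large deviations. -/
theorem subadditive_upper_large_deviations
    {X : Type*} [MetricSpace X] [CompactSpace X] [MeasurableSpace X] [BorelSpace X]
    (T : X → X) (hTcont : Continuous T)
    (μ : Measure X) [IsProbabilityMeasure μ] (hErg : Ergodic T μ)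
    (hbirk : ∀ f : X → ℝ, Continuous f → ∀ ε' > (0 : ℝ), ∃ C > (0 : ℝ), ∀ n : ℕ,
      μ {x | (n : ℝ) * ε' ≤ |(∑ j ∈ Finset.range n, f (T^[j] x)) - n * ∫ y, f y ∂μ|}
        ≤ ENNReal.ofReal (C * Real.exp (-(n : ℝ) / C)))
    (a : ℕ → X → ℝ)
    (hsub : ∀ (m n : ℕ) (x : X), a (m + n) x ≤ a m x + a n (T^[m] x))
    (hcont : ∀ n, Continuous (a n))
    (lam : ℝ)
    (hae : ∀ᵐ x ∂μ, Tendsto (fun n : ℕ => a n x / n) atTop (nhds lam)) :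
    ∀ ε > (0 : ℝ), ∃ C > (0 : ℝ), ∀ n : ℕ,
      μ {x | (n : ℝ) * lam + n * ε ≤ a n x} ≤ ENNReal.ofReal (C * Real.exp (-(n : ℝ) / C)) := by
  intro ε hε
  obtain ⟨k, hk, hIk⟩ := sld_exists_good_k T μ a hsub hcont lam hae (ε / 4) (by linarith)
  have hkR : (0 : ℝ) < k := by exact_mod_cast hk
  have hNe : Nonempty X := by
    by_contra h
    rw [not_nonempty_iff] at h
    have h1 : μ Set.univ = 1 := measure_univ
    rw [Set.univ_eq_empty_iff.mpr h, measure_empty] at h1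
    exact zero_ne_one h1
  -- uniform bound B for |a m|, m ≤ k
  have hFc : Continuous (fun x => ∑ m ∈ Finset.range (k + 1), |a m x|) :=
    continuous_finset_sum _ fun m _ => (hcont m).abs
  obtain ⟨xB, -, hxB⟩ := IsCompact.exists_isMaxOn isCompact_univ Set.univ_nonempty
    hFc.continuousOn
  set B : ℝ := ∑ m ∈ Finset.range (k + 1), |a m xB| with hBdef
  have hB0 : 0 ≤ B := Finset.sum_nonneg fun m _ => abs_nonneg _
  have hbd : ∀ m ≤ k, ∀ x, |a m x| ≤ B := by
    intro m hm x
    calc |a m x| ≤ ∑ m ∈ Finset.range (k + 1), |a m x| :=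
          Finset.single_le_sum (f := fun m => |a m x|) (fun i _ => abs_nonneg _)
            (Finset.mem_range.mpr (by omega))
      _ ≤ B := hxB (Set.mem_univ x)
  set f : X → ℝ := fun x => a k x / k with hfdef
  have hfc : Continuous f := (hcont k).div_const _
  have hIf : ∫ y, f y ∂μ ≤ lam + ε / 4 := by
    rw [hfdef]
    rw [integral_div]
    exact hIk
  obtain ⟨C₁, hC₁, hC₁b⟩ := hbirk f hfc (ε / 2) (by linarith)
  set D : ℝ := 4 * k * B with hDdef
  have hD0 : 0 ≤ D := by positivity
  set N₀ : ℕ := ⌈4 * D / (k * ε)⌉₊ with hN₀def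
  set C : ℝ := max C₁ ((N₀ : ℝ) + 3) with hCdef
  have hC : 0 < C := lt_of_lt_of_le hC₁ (le_max_left _ _)
  refine ⟨C, hC, fun n => ?_⟩
  by_cases hn : N₀ ≤ n
  · -- large n
    have ha : 4 * D / (k * ε) ≤ (n : ℝ) := by
      have := Nat.ceil_le.mp hn
      exact_mod_cast this
    have hDn : D / k ≤ (n : ℝ) * (ε / 4) := by
      rw [div_le_iff₀ hkR] at *
      rw [div_le_iff₀ (by positivity : (0:ℝ) < k * ε)] at ha
      nlinarith
    have hincl : {x | (n : ℝ) * lam + n * ε ≤ a n x}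
        ⊆ {x | (n : ℝ) * (ε / 2) ≤ |(∑ j ∈ Finset.range n, f (T^[j] x)) - n * ∫ y, f y ∂μ|} := by
      intro x hx
      simp only [Set.mem_setOf_eq] at hx ⊢
      have h1 := sld_key T a hsub k hk B hB0 hbd n x
      have h2 : (∑ j ∈ Finset.range n, f (T^[j] x))
          = (∑ j ∈ Finset.range n, a k (T^[j] x)) / k := by
        rw [hfdef, Finset.sum_div]
      have h3 : a n x - D / k ≤ ∑ j ∈ Finset.range n, f (T^[j] x) := by
        rw [h2, sub_le_iff_le_add, ← add_div, le_div_iff₀ hkR]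
        have hcomm : a n x * (k : ℝ) = (k : ℝ) * a n x := mul_comm _ _
        linarith [h1, hDdef, hcomm]
      have h4 : (n : ℝ) * ∫ y, f y ∂μ ≤ (n : ℝ) * (lam + ε / 4) :=
        mul_le_mul_of_nonneg_left hIf (Nat.cast_nonneg n)
      have h5 : (n : ℝ) * (ε / 2) ≤ (∑ j ∈ Finset.range n, f (T^[j] x)) - n * ∫ y, f y ∂μ := by
        nlinarith
      exact h5.trans (le_abs_self _)
    calc μ {x | (n : ℝ) * lam + n * ε ≤ a n x}
        ≤ μ {x | (n : ℝ) * (ε / 2)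
            ≤ |(∑ j ∈ Finset.range n, f (T^[j] x)) - n * ∫ y, f y ∂μ|} := measure_mono hincl
      _ ≤ ENNReal.ofReal (C₁ * Real.exp (-(n : ℝ) / C₁)) := hC₁b n
      _ ≤ ENNReal.ofReal (C * Real.exp (-(n : ℝ) / C)) := by
          apply ENNReal.ofReal_le_ofReal
          have hCC : C₁ ≤ C := le_max_left _ _
          have he : Real.exp (-(n : ℝ) / C₁) ≤ Real.exp (-(n : ℝ) / C) := by
            apply Real.exp_le_exp.mpr
            rw [neg_div, neg_div, neg_le_neg_iff]
            exact div_le_div_of_nonneg_left (Nat.cast_nonneg n) hC₁ hCC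
          calc C₁ * Real.exp (-(n : ℝ) / C₁) ≤ C₁ * Real.exp (-(n : ℝ) / C) :=
                mul_le_mul_of_nonneg_left he hC₁.le
            _ ≤ C * Real.exp (-(n : ℝ) / C) :=
                mul_le_mul_of_nonneg_right hCC (Real.exp_pos _).le
  · -- small n
    push_neg at hn
    have h1 : μ {x | (n : ℝ) * lam + n * ε ≤ a n x} ≤ 1 := prob_le_one
    refine h1.trans ?_
    rw [← ENNReal.ofReal_one]
    apply ENNReal.ofReal_le_ofReal
    have hnC : (n : ℝ) ≤ C := by
      have h2 : (n : ℝ) ≤ (N₀ : ℝ) := by exact_mod_cast hn.le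
      calc (n : ℝ) ≤ (N₀ : ℝ) := h2
        _ ≤ (N₀ : ℝ) + 3 := by linarith
        _ ≤ C := le_max_right _ _
    have h3 : (n : ℝ) / C ≤ 1 := (div_le_one hC).mpr hnC
    have h4 : Real.exp (-1) ≤ Real.exp (-(n : ℝ) / C) := by
      apply Real.exp_le_exp.mpr
      rw [neg_div]
      linarith
    have h5 : (1 : ℝ) / 3 < Real.exp (-1) := by
      rw [Real.exp_neg, one_div]
      exact inv_strictAnti₀ (Real.exp_pos 1)
        (lt_trans Real.exp_one_lt_d9 (by norm_num))
    have h6 : (3 : ℝ) ≤ C := by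
      have := Nat.cast_nonneg (α := ℝ) N₀
      have h7 : ((N₀ : ℝ) + 3) ≤ C := le_max_right _ _
      linarith
    nlinarith [Real.exp_pos (-(n : ℝ) / C)]
end

section
/- Let E be a finite-dimensional real inner product space. For linear subspaces U, V of E define df(U, V) = ‖π_{V^⊥} ∘ π_U‖, the operator norm of the composition of the orthogonal projection onto U followed by the orthogonal projection onto the orthogonal complement of V. Then for all subspaces U, V, W of E, df(U, W) ≤ df(U, V) + df(V, W). -/
open Submodule

variable {E : Type*} [NormedAddCommGroup E] [InnerProductSpace ℝ E] [FiniteDimensional ℝ E]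

/-- `df(U,V) = ‖π_{V^⊥} ∘ π_U‖`, the operator norm of the composition of the orthogonal
projection onto `U` followed by the orthogonal projection onto `V^⊥`. -/
noncomputable def grassDist (U V : Submodule ℝ E) : ℝ :=
  ‖((Vᗮ.subtypeL.comp (orthogonalProjection Vᗮ)).comp
      (U.subtypeL.comp (orthogonalProjection U)))‖

lemma proj_norm_le (S : Submodule ℝ E) : ‖S.subtypeL.comp (orthogonalProjection S)‖ ≤ 1 :=
  le_trans (ContinuousLinearMap.opNorm_comp_le _ _) <|
    mul_le_one₀ (Submodule.norm_subtypeL_le S) (norm_nonneg _)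
      (orthogonalProjection_norm_le S)

/-- triangle inequality for the Grassmannian distance
`df(U,V) = ‖π_{V^⊥} ∘ π_U‖`. -/
theorem grassDist_triangle (U V W : Submodule ℝ E) :
    grassDist U W ≤ grassDist U V + grassDist V W := by
  set PU := U.subtypeL.comp (orthogonalProjection U)
  set PV := V.subtypeL.comp (orthogonalProjection V)
  set PV' := Vᗮ.subtypeL.comp (orthogonalProjection Vᗮ)
  set PW' := Wᗮ.subtypeL.comp (orthogonalProjection Wᗮ)
  have hdec : PW'.comp PU = (PW'.comp PV).comp PU + PW'.comp (PV'.comp PU) := by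
    have := id_eq_sum_starProjection_self_orthogonalComplement (𝕜 := ℝ) (K := V)
    ext x
    have hx : PV (PU x) + PV' (PU x) = PU x :=
      Submodule.starProjection_add_starProjection_orthogonal (K := V) (PU x)
    simp only [ContinuousLinearMap.comp_apply, ContinuousLinearMap.add_apply]
    rw [← map_add, hx]
  calc grassDist U W = ‖(PW'.comp PV).comp PU + PW'.comp (PV'.comp PU)‖ := by
        rw [grassDist, ← hdec]
    _ ≤ ‖(PW'.comp PV).comp PU‖ + ‖PW'.comp (PV'.comp PU)‖ := norm_add_le _ _
    _ ≤ ‖PW'.comp PV‖ * ‖PU‖ + ‖PW'‖ * ‖PV'.comp PU‖ :=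
        add_le_add (ContinuousLinearMap.opNorm_comp_le _ _)
          (ContinuousLinearMap.opNorm_comp_le _ _)
    _ ≤ ‖PW'.comp PV‖ * 1 + 1 * ‖PV'.comp PU‖ :=
        add_le_add (mul_le_mul_of_nonneg_left (proj_norm_le U) (norm_nonneg _))
          (mul_le_mul_of_nonneg_right (proj_norm_le Wᗮ) (norm_nonneg _))
    _ = grassDist U V + grassDist V W := by
        rw [mul_one, one_mul, grassDist, grassDist]; ring
end

section
/- Let E be a finite-dimensional real inner product space. For linear subspaces U, V of E define df(U, V) = ‖π_{V^⊥} ∘ π_U‖, the operator norm of the composition of the orthogonal projection onto U followed by the orthogonal projection onto the orthogonal complement of V. If U and V have the same dimension, then df(U, V) = df(V, U). -/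
open Submodule ContinuousLinearMap

variable {E : Type*} [NormedAddCommGroup E] [InnerProductSpace ℝ E] [FiniteDimensional ℝ E]

lemma adjoint_bound_below {X Y : Type*} [NormedAddCommGroup X] [InnerProductSpace ℝ X]
    [NormedAddCommGroup Y] [InnerProductSpace ℝ Y] [FiniteDimensional ℝ X]
    [FiniteDimensional ℝ Y] (hdim : Module.finrank ℝ X = Module.finrank ℝ Y)
    (S : Y →L[ℝ] X) {c : ℝ} (hc : 0 < c) (h : ∀ y : Y, c * ‖y‖ ≤ ‖S y‖) (x : X) :
    c * ‖x‖ ≤ ‖S.adjoint x‖ := by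
  have hinj : Function.Injective (S : Y →ₗ[ℝ] X) := by
    rw [← LinearMap.ker_eq_bot, LinearMap.ker_eq_bot']
    intro y hy
    have hy' : S y = 0 := hy
    have := h y
    rw [hy', norm_zero] at this
    have hy0 : ‖y‖ ≤ 0 := by nlinarith [norm_nonneg y]
    exact norm_le_zero_iff.mp hy0
  have hsurj : Function.Surjective (S : Y →ₗ[ℝ] X) :=
    (LinearMap.injective_iff_surjective_of_finrank_eq_finrank hdim.symm).mp hinj
  let e' : Y ≃ₗ[ℝ] X := LinearEquiv.ofBijective (S : Y →ₗ[ℝ] X) ⟨hinj, hsurj⟩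
  let e : Y ≃L[ℝ] X := e'.toContinuousLinearEquiv
  have he : ∀ y, e y = S y := fun y => rfl
  have hsymm : ∀ x : X, ‖(e.symm : X →L[ℝ] Y) x‖ ≤ c⁻¹ * ‖x‖ := by
    intro x
    have h1 := h (e.symm x)
    have h2 : S (e.symm x) = x := by rw [← he]; exact e.apply_symm_apply x
    rw [h2] at h1
    have : ‖e.symm x‖ ≤ c⁻¹ * ‖x‖ := by
      rw [inv_mul_eq_div, le_div_iff₀ hc]; linarith
    exact this
  have hcomp : ((e.symm : X →L[ℝ] Y).adjoint).comp S.adjoint = ContinuousLinearMap.id ℝ X := by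
    rw [← adjoint_comp, ← adjoint_id]
    congr 1
    ext x
    exact (he (e.symm x)).symm.trans (e.apply_symm_apply x)
  have hnorm : ‖(e.symm : X →L[ℝ] Y).adjoint‖ = ‖(e.symm : X →L[ℝ] Y)‖ :=
    LinearIsometryEquiv.norm_map ContinuousLinearMap.adjoint _
  have hne : ‖(e.symm : X →L[ℝ] Y)‖ ≤ c⁻¹ :=
    opNorm_le_bound _ (by positivity) fun x => hsymm x
  have key : ‖x‖ ≤ c⁻¹ * ‖S.adjoint x‖ := by
    calc ‖x‖ = ‖((e.symm : X →L[ℝ] Y).adjoint) (S.adjoint x)‖ := by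
          rw [← ContinuousLinearMap.comp_apply, hcomp]; rfl
      _ ≤ ‖(e.symm : X →L[ℝ] Y).adjoint‖ * ‖S.adjoint x‖ := le_opNorm _ _
      _ ≤ c⁻¹ * ‖S.adjoint x‖ := by
          apply mul_le_mul_of_nonneg_right _ (norm_nonneg _)
          rw [hnorm]; exact hne
  calc c * ‖x‖ ≤ c * (c⁻¹ * ‖S.adjoint x‖) := by nlinarith
    _ = ‖S.adjoint x‖ := by field_simp

lemma norm_orthProj_le (K : Submodule ℝ E) (y : E) : ‖orthogonalProjection K y‖ ≤ ‖y‖ :=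
  calc ‖orthogonalProjection K y‖ ≤ ‖orthogonalProjection K‖ * ‖y‖ := le_opNorm _ _
    _ ≤ 1 * ‖y‖ := mul_le_mul_of_nonneg_right (orthogonalProjection_norm_le K) (norm_nonneg y)
    _ = ‖y‖ := one_mul _

lemma grassDist_nonneg (U V : Submodule ℝ E) : 0 ≤ grassDist U V := norm_nonneg _

lemma grassDist_apply (U V : Submodule ℝ E) (x : E) :
    ‖((Vᗮ.subtypeL.comp (orthogonalProjection Vᗮ)).comp
      (U.subtypeL.comp (orthogonalProjection U))) x‖
      = ‖orthogonalProjection Vᗮ ((orthogonalProjection U x : E))‖ := rfl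

lemma grassDist_le_one (U V : Submodule ℝ E) : grassDist U V ≤ 1 := by
  apply opNorm_le_bound _ zero_le_one
  intro x
  rw [grassDist_apply, one_mul]
  calc ‖orthogonalProjection Vᗮ ((orthogonalProjection U x : E))‖
      ≤ ‖(orthogonalProjection U x : E)‖ := norm_orthProj_le _ _
    _ = ‖orthogonalProjection U x‖ := rfl
    _ ≤ ‖x‖ := norm_orthProj_le _ _

lemma real_aux {a b n x d c : ℝ} (hpyth : n ^ 2 = a ^ 2 + b ^ 2) (hub : c * n ≤ a)
    (hc2 : c ^ 2 = 1 - d ^ 2) (hn : 0 ≤ n) (hx : n ≤ x) (hd0 : 0 ≤ d) (hx0 : 0 ≤ x) (hc0 : 0 ≤ c) :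
    b ^ 2 ≤ (d * x) ^ 2 := by
  have h1 : (c * n) ^ 2 ≤ a ^ 2 := by nlinarith [mul_nonneg hc0 hn]
  have h2 : n ^ 2 ≤ x ^ 2 := by nlinarith
  nlinarith [mul_nonneg (mul_nonneg hd0 hd0) (mul_nonneg hn hn), sq_nonneg d]

lemma grassDist_le (U V : Submodule ℝ E)
    (hdim : Module.finrank ℝ U = Module.finrank ℝ V) :
    grassDist U V ≤ grassDist V U := by
  set δ := grassDist V U with hδ
  have hδ0 : 0 ≤ δ := grassDist_nonneg V U
  rcases le_or_gt 1 δ with h1 | h1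
  · exact (grassDist_le_one U V).trans h1
  · set c := Real.sqrt (1 - δ ^ 2) with hc
    have hc2 : c ^ 2 = 1 - δ ^ 2 := Real.sq_sqrt (by nlinarith)
    have hcpos : 0 < c := Real.sqrt_pos.mpr (by nlinarith)
    set S : V →L[ℝ] U := (orthogonalProjection U).comp V.subtypeL with hS
    -- lower bound for S
    have hSb : ∀ v : V, c * ‖v‖ ≤ ‖S v‖ := by
      intro v
      have hdelta : ‖orthogonalProjection Uᗮ ((v : E))‖ ≤ δ * ‖v‖ := by
        have := le_opNorm ((Uᗮ.subtypeL.comp (orthogonalProjection Uᗮ)).comp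
          (V.subtypeL.comp (orthogonalProjection V))) (v : E)
        rw [grassDist_apply] at this
        rwa [orthogonalProjection_mem_subspace_eq_self v] at this
      have hpyth := norm_sq_eq_add_norm_sq_projection ((v : E)) U
      have hnv : ‖(v : E)‖ = ‖v‖ := rfl
      have hSv : ‖S v‖ = ‖orthogonalProjection U ((v : E))‖ := rfl
      have hsq : (c * ‖v‖) ^ 2 ≤ ‖S v‖ ^ 2 := by
        rw [hSv, mul_pow, hc2]
        nlinarith [norm_nonneg v, norm_nonneg (orthogonalProjection Uᗮ ((v : E)))]
      exact le_of_pow_le_pow_left₀ two_ne_zero (norm_nonneg (S v)) hsq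
    have hTb : ∀ u : U, c * ‖u‖ ≤ ‖S.adjoint u‖ :=
      adjoint_bound_below hdim S hcpos hSb
    -- compute S.adjoint
    have hadj : S.adjoint = (orthogonalProjection V).comp U.subtypeL := by
      rw [hS, adjoint_comp, V.adjoint_subtypeL, U.adjoint_orthogonalProjection]
    apply opNorm_le_bound _ hδ0
    intro x
    rw [grassDist_apply]
    set u : U := orthogonalProjection U x with hu
    have hxu : ‖u‖ ≤ ‖x‖ := norm_orthProj_le U x
    clear_value u
    have hub : ‖orthogonalProjection V ((u : E))‖ ≥ c * ‖u‖ := by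
      have := hTb u
      rwa [hadj] at this
    have hpyth := norm_sq_eq_add_norm_sq_projection ((u : E)) V
    have hnu : ‖(u : E)‖ = ‖u‖ := rfl
    rw [hnu] at hpyth
    have hsq : ‖orthogonalProjection Vᗮ ((u : E))‖ ^ 2 ≤ (δ * ‖x‖) ^ 2 :=
      real_aux hpyth hub hc2 (norm_nonneg u) hxu hδ0 (norm_nonneg x) hcpos.le
    exact le_of_pow_le_pow_left₀ two_ne_zero (by positivity) hsq

/-- symmetry of the Grassmannian distance on subspaces of equal dimension. -/
theorem grassDist_symm (U V : Submodule ℝ E)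
    (hdim : Module.finrank ℝ U = Module.finrank ℝ V) :
    grassDist U V = grassDist V U :=
  le_antisymm (grassDist_le U V hdim) (grassDist_le V U hdim.symm)
end

section
/- Let (X, μ) be a probability space and T : X → X an invertible bimeasurable map preserving μ, with μ ergodic. Let d_1, d_2 ≥ 1 and let A_1 : X → GL(d_1,ℝ), A_2 : X → GL(d_2,ℝ) and B : X → Mat_{d_1×d_2}(ℝ) be measurable with log⁺‖A_k(·)‖, log⁺‖A_k(·)^{−1}‖ (k = 1,2) and log⁺‖B(·)‖ all μ-integrable. Define M(x) ∈ GL(d_1+d_2, ℝ) to be the block upper-triangular matrix with diagonal blocks A_1(x), A_2(x) and upper-right block B(x). Assume there is λ ∈ ℝ such that for μ-almost every x and k = 1, 2, (1/n) log‖A_k^n(x)‖ → λ and (1/n) log‖(A_k^n(x))^{−1}‖ → −λ as n → ∞. Then for μ-almost every x, (1/n) log‖M^n(x)‖ → λ and (1/n) log‖(M^n(x))^{−1}‖ → −λ as n → ∞. -/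
open MeasureTheory Filter Real Set

/-- Operator norm of a matrix, for the Euclidean norms. -/
noncomputable def opNorm {m n : Type*} [Fintype m] [Fintype n] [DecidableEq n]
    (A : Matrix m n ℝ) : ℝ :=
  ‖LinearMap.toContinuousLinearMap (Matrix.toEuclideanLin A)‖

/-- The matrix cocycle `N^n(x) = N(T^{n-1}x) ⋯ N(x)`. -/
def cocycle {X ι : Type*} [Fintype ι] [DecidableEq ι] (T : X → X) (M : X → Matrix ι ι ℝ) :
    ℕ → X → Matrix ι ι ℝ
  | 0, _ => 1
  | n + 1, x => cocycle T M n (T x) * M x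

/-- Matrices carry the (Borel) product measurable structure. -/
instance matrixMeasurableSpace {m n : Type*} : MeasurableSpace (Matrix m n ℝ) :=
  inferInstanceAs (MeasurableSpace (m → n → ℝ))


set_option linter.unusedSectionVars false
set_option linter.unusedVariables false

section OpNormBasics

variable {m n l : Type*} [Fintype m] [Fintype n] [Fintype l]
  [DecidableEq m] [DecidableEq n] [DecidableEq l]

lemma opNorm_nonneg (A : Matrix m n ℝ) : 0 ≤ opNorm A := norm_nonneg _

lemma opNorm_zero : opNorm (0 : Matrix m n ℝ) = 0 := by simp [opNorm]

lemma opNorm_neg (A : Matrix m n ℝ) : opNorm (-A) = opNorm A := by simp [opNorm]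

lemma opNorm_mul_le (A : Matrix m n ℝ) (B : Matrix n l ℝ) :
    opNorm (A * B) ≤ opNorm A * opNorm B := by
  have h : (LinearMap.toContinuousLinearMap (Matrix.toEuclideanLin (A * B)))
      = (LinearMap.toContinuousLinearMap (Matrix.toEuclideanLin A)).comp
        (LinearMap.toContinuousLinearMap (Matrix.toEuclideanLin B)) := by
    ext1 x
    simp [Matrix.toEuclideanLin_apply, Matrix.mulVec_mulVec]
  rw [opNorm, h]
  exact ContinuousLinearMap.opNorm_comp_le _ _

lemma opNorm_sum_le {ι : Type*} (s : Finset ι) (f : ι → Matrix m n ℝ) :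
    opNorm (∑ k ∈ s, f k) ≤ ∑ k ∈ s, opNorm (f k) := by
  unfold opNorm
  rw [map_sum, map_sum]
  exact norm_sum_le _ _

lemma coord_abs_le_norm (y : EuclideanSpace ℝ m) (i : m) : |y i| ≤ ‖y‖ := by
  rw [EuclideanSpace.norm_eq]
  calc |y i| = Real.sqrt (‖y i‖ ^ 2) := by
        rw [Real.sqrt_sq_eq_abs]; simp [Real.norm_eq_abs, abs_abs]
    _ ≤ _ := Real.sqrt_le_sqrt (Finset.single_le_sum
        (fun j _ => sq_nonneg ‖y j‖) (Finset.mem_univ i))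

lemma norm_le_sum_abs (y : EuclideanSpace ℝ m) : ‖y‖ ≤ ∑ i, |y i| := by
  rw [EuclideanSpace.norm_eq]
  have h : ∑ i, ‖y i‖ ^ 2 ≤ (∑ i, ‖y i‖) ^ 2 :=
    Finset.sum_sq_le_sq_sum_of_nonneg (fun i _ => norm_nonneg _)
  calc Real.sqrt (∑ i, ‖y i‖ ^ 2) ≤ Real.sqrt ((∑ i, ‖y i‖) ^ 2) := Real.sqrt_le_sqrt h
    _ = ∑ i, ‖y i‖ := Real.sqrt_sq (Finset.sum_nonneg fun i _ => norm_nonneg _)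
    _ = ∑ i, |y i| := by simp [Real.norm_eq_abs]

lemma abs_entry_le_opNorm (A : Matrix m n ℝ) (i : m) (j : n) : |A i j| ≤ opNorm A := by
  have hx : ‖(EuclideanSpace.single j (1:ℝ) : EuclideanSpace ℝ n)‖ = 1 := by
    simp [EuclideanSpace.norm_single]
  have happ : (LinearMap.toContinuousLinearMap (Matrix.toEuclideanLin A))
      (EuclideanSpace.single j (1:ℝ)) i = A i j := by
    simp [Matrix.toEuclideanLin_apply, Matrix.mulVec, dotProduct]
  calc |A i j| = |(LinearMap.toContinuousLinearMap (Matrix.toEuclideanLin A))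
        (EuclideanSpace.single j (1:ℝ)) i| := by rw [happ]
    _ ≤ ‖(LinearMap.toContinuousLinearMap (Matrix.toEuclideanLin A))
        (EuclideanSpace.single j (1:ℝ))‖ := coord_abs_le_norm _ i
    _ ≤ opNorm A * ‖(EuclideanSpace.single j (1:ℝ) : EuclideanSpace ℝ n)‖ :=
        ContinuousLinearMap.le_opNorm _ _
    _ = opNorm A := by rw [hx, mul_one]

lemma opNorm_le_sum_abs (A : Matrix m n ℝ) : opNorm A ≤ ∑ i, ∑ j, |A i j| := by
  refine ContinuousLinearMap.opNorm_le_bound _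
    (Finset.sum_nonneg fun i _ => Finset.sum_nonneg fun j _ => abs_nonneg _) fun x => ?_
  have key : ∀ i, |(Matrix.toEuclideanLin A x) i| ≤ (∑ j, |A i j|) * ‖x‖ := by
    intro i
    have h1 : (Matrix.toEuclideanLin A x) i = ∑ j, A i j * x j := by
      simp [Matrix.toEuclideanLin_apply, Matrix.mulVec, dotProduct]
    rw [h1]
    calc |∑ j, A i j * x j| ≤ ∑ j, |A i j * x j| := Finset.abs_sum_le_sum_abs _ _
      _ ≤ ∑ j, |A i j| * ‖x‖ := by
          refine Finset.sum_le_sum fun j _ => ?_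
          rw [abs_mul]
          exact mul_le_mul_of_nonneg_left (coord_abs_le_norm x j) (abs_nonneg _)
      _ = (∑ j, |A i j|) * ‖x‖ := (Finset.sum_mul _ _ _).symm
  calc ‖(LinearMap.toContinuousLinearMap (Matrix.toEuclideanLin A)) x‖
      ≤ ∑ i, |(Matrix.toEuclideanLin A x) i| := norm_le_sum_abs _
    _ ≤ ∑ i, (∑ j, |A i j|) * ‖x‖ := Finset.sum_le_sum fun i _ => key i
    _ = (∑ i, ∑ j, |A i j|) * ‖x‖ := (Finset.sum_mul _ _ _).symm

lemma opNorm_pos_of_isUnit [Nonempty m] {A : Matrix m m ℝ} (h : IsUnit A) : 0 < opNorm A := by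
  have hA : A ≠ 0 := by
    rintro rfl
    exact not_isUnit_zero h
  obtain ⟨i, j, hij⟩ : ∃ i j, A i j ≠ 0 := by
    by_contra hc
    push_neg at hc
    exact hA (by ext i j; simpa using hc i j)
  exact lt_of_lt_of_le (abs_pos.2 hij) (abs_entry_le_opNorm A i j)

end OpNormBasics

section Blocks

variable {m n : Type*} [Fintype m] [Fintype n] [DecidableEq m] [DecidableEq n]

lemma sum_abs_le_card_mul_opNorm (A : Matrix m n ℝ) :
    ∑ i, ∑ j, |A i j| ≤ (Fintype.card m : ℝ) * (Fintype.card n : ℝ) * opNorm A := by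
  calc ∑ i, ∑ j, |A i j| ≤ ∑ _i : m, ∑ _j : n, opNorm A :=
        Finset.sum_le_sum fun i _ => Finset.sum_le_sum fun j _ => abs_entry_le_opNorm A i j
    _ = (Fintype.card m : ℝ) * (Fintype.card n : ℝ) * opNorm A := by
        simp [Finset.sum_const, Finset.card_univ, mul_assoc]

lemma opNorm_fromBlocks_le (P : Matrix m m ℝ) (C : Matrix m n ℝ) (Z : Matrix n m ℝ)
    (Q : Matrix n n ℝ) :
    opNorm (Matrix.fromBlocks P C Z Q)
      ≤ ((Fintype.card m + Fintype.card n : ℕ) : ℝ) ^ 2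
        * (opNorm P + opNorm C + opNorm Z + opNorm Q) := by
  set c : ℝ := ((Fintype.card m + Fintype.card n : ℕ) : ℝ) with hc
  have hm : (Fintype.card m : ℝ) ≤ c := by rw [hc]; push_cast; linarith [Nat.cast_nonneg (α := ℝ) (Fintype.card n)]
  have hn : (Fintype.card n : ℝ) ≤ c := by rw [hc]; push_cast; linarith [Nat.cast_nonneg (α := ℝ) (Fintype.card m)]
  have hm0 : (0:ℝ) ≤ (Fintype.card m : ℝ) := Nat.cast_nonneg _
  have hn0 : (0:ℝ) ≤ (Fintype.card n : ℝ) := Nat.cast_nonneg _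
  have hc0 : (0:ℝ) ≤ c := le_trans hm0 hm
  have key := opNorm_le_sum_abs (Matrix.fromBlocks P C Z Q)
  rw [Fintype.sum_sum_type] at key
  simp only [Fintype.sum_sum_type, Matrix.fromBlocks_apply₁₁, Matrix.fromBlocks_apply₁₂,
    Matrix.fromBlocks_apply₂₁, Matrix.fromBlocks_apply₂₂] at key
  have h11 := sum_abs_le_card_mul_opNorm P
  have h12 := sum_abs_le_card_mul_opNorm C
  have h21 := sum_abs_le_card_mul_opNorm Z
  have h22 := sum_abs_le_card_mul_opNorm Q
  have hmm : (Fintype.card m : ℝ) * (Fintype.card m : ℝ) ≤ c^2 := by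
    rw [sq]; exact mul_le_mul hm hm hm0 hc0
  have hmn : (Fintype.card m : ℝ) * (Fintype.card n : ℝ) ≤ c^2 := by
    rw [sq]; exact mul_le_mul hm hn hn0 hc0
  have hnm : (Fintype.card n : ℝ) * (Fintype.card m : ℝ) ≤ c^2 := by
    rw [sq]; exact mul_le_mul hn hm hm0 hc0
  have hnn : (Fintype.card n : ℝ) * (Fintype.card n : ℝ) ≤ c^2 := by
    rw [sq]; exact mul_le_mul hn hn hn0 hc0
  have e1 := mul_le_mul_of_nonneg_right hmm (opNorm_nonneg P)
  have e2 := mul_le_mul_of_nonneg_right hmn (opNorm_nonneg C)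
  have e3 := mul_le_mul_of_nonneg_right hnm (opNorm_nonneg Z)
  have e4 := mul_le_mul_of_nonneg_right hnn (opNorm_nonneg Q)
  calc opNorm (Matrix.fromBlocks P C Z Q)
      ≤ (∑ i : m, (∑ j : m, |P i j| + ∑ j : n, |C i j|))
        + ∑ i : n, (∑ j : m, |Z i j| + ∑ j : n, |Q i j|) := key
    _ = (∑ i : m, ∑ j : m, |P i j|) + (∑ i : m, ∑ j : n, |C i j|)
        + ((∑ i : n, ∑ j : m, |Z i j|) + ∑ i : n, ∑ j : n, |Q i j|) := by
        rw [Finset.sum_add_distrib, Finset.sum_add_distrib]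
    _ ≤ c^2 * opNorm P + c^2 * opNorm C + (c^2 * opNorm Z + c^2 * opNorm Q) := by
        gcongr <;> [exact le_trans h11 e1; exact le_trans h12 e2;
          exact le_trans h21 e3; exact le_trans h22 e4]
    _ = c^2 * (opNorm P + opNorm C + opNorm Z + opNorm Q) := by ring

lemma opNorm_le_fromBlocks₁₁ (P : Matrix m m ℝ) (C : Matrix m n ℝ) (Z : Matrix n m ℝ)
    (Q : Matrix n n ℝ) :
    opNorm P ≤ ((Fintype.card m + Fintype.card n : ℕ) : ℝ) ^ 2
      * opNorm (Matrix.fromBlocks P C Z Q) := by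
  set c : ℝ := ((Fintype.card m + Fintype.card n : ℕ) : ℝ) with hc
  have hF := opNorm_nonneg (Matrix.fromBlocks P C Z Q)
  have h1 : opNorm P ≤ (Fintype.card m : ℝ) * (Fintype.card m : ℝ)
      * opNorm (Matrix.fromBlocks P C Z Q) := by
    calc opNorm P ≤ ∑ i, ∑ j, |P i j| := opNorm_le_sum_abs P
      _ ≤ ∑ _i : m, ∑ _j : m, opNorm (Matrix.fromBlocks P C Z Q) := by
          refine Finset.sum_le_sum fun i _ => Finset.sum_le_sum fun j _ => ?_
          have := abs_entry_le_opNorm (Matrix.fromBlocks P C Z Q) (Sum.inl i) (Sum.inl j)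
          simpa using this
      _ = (Fintype.card m : ℝ) * (Fintype.card m : ℝ) * opNorm (Matrix.fromBlocks P C Z Q) := by
          simp [Finset.sum_const, Finset.card_univ, mul_assoc]
  refine le_trans h1 ?_
  have hm : (Fintype.card m : ℝ) ≤ c := by rw [hc]; push_cast; linarith [Nat.cast_nonneg (α := ℝ) (Fintype.card n)]
  have hm0 : (0:ℝ) ≤ (Fintype.card m : ℝ) := Nat.cast_nonneg _
  have hc0 : (0:ℝ) ≤ c := le_trans hm0 hm
  have : (Fintype.card m : ℝ) * (Fintype.card m : ℝ) ≤ c^2 := by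
    rw [sq]; exact mul_le_mul hm hm hm0 hc0
  exact mul_le_mul_of_nonneg_right this hF

lemma opNorm_le_fromBlocks₂₂ (P : Matrix m m ℝ) (C : Matrix m n ℝ) (Z : Matrix n m ℝ)
    (Q : Matrix n n ℝ) :
    opNorm Q ≤ ((Fintype.card m + Fintype.card n : ℕ) : ℝ) ^ 2
      * opNorm (Matrix.fromBlocks P C Z Q) := by
  set c : ℝ := ((Fintype.card m + Fintype.card n : ℕ) : ℝ) with hc
  have hF := opNorm_nonneg (Matrix.fromBlocks P C Z Q)
  have h1 : opNorm Q ≤ (Fintype.card n : ℝ) * (Fintype.card n : ℝ)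
      * opNorm (Matrix.fromBlocks P C Z Q) := by
    calc opNorm Q ≤ ∑ i, ∑ j, |Q i j| := opNorm_le_sum_abs Q
      _ ≤ ∑ _i : n, ∑ _j : n, opNorm (Matrix.fromBlocks P C Z Q) := by
          refine Finset.sum_le_sum fun i _ => Finset.sum_le_sum fun j _ => ?_
          have := abs_entry_le_opNorm (Matrix.fromBlocks P C Z Q) (Sum.inr i) (Sum.inr j)
          simpa using this
      _ = (Fintype.card n : ℝ) * (Fintype.card n : ℝ) * opNorm (Matrix.fromBlocks P C Z Q) := by
          simp [Finset.sum_const, Finset.card_univ, mul_assoc]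
  refine le_trans h1 ?_
  have hn : (Fintype.card n : ℝ) ≤ c := by rw [hc]; push_cast; linarith [Nat.cast_nonneg (α := ℝ) (Fintype.card m)]
  have hn0 : (0:ℝ) ≤ (Fintype.card n : ℝ) := Nat.cast_nonneg _
  have hc0 : (0:ℝ) ≤ c := le_trans hn0 hn
  have : (Fintype.card n : ℝ) * (Fintype.card n : ℝ) ≤ c^2 := by
    rw [sq]; exact mul_le_mul hn hn hn0 hc0
  exact mul_le_mul_of_nonneg_right this hF

end Blocks

section Cocycle

variable {X : Type*} {m n : Type*} [Fintype m] [Fintype n] [DecidableEq m] [DecidableEq n]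

lemma cocycle_add (T : X → X) (N : X → Matrix m m ℝ) (a b : ℕ) (x : X) :
    cocycle T N (a + b) x = cocycle T N a (T^[b] x) * cocycle T N b x := by
  induction b generalizing x with
  | zero => simp [cocycle]
  | succ b ih =>
      show cocycle T N ((a + b) + 1) x = _
      rw [show cocycle T N ((a+b) + 1) x = cocycle T N (a+b) (T x) * N x from rfl, ih (T x),
        show cocycle T N (b + 1) x = cocycle T N b (T x) * N x from rfl,
        Function.iterate_succ_apply, mul_assoc]

lemma cocycle_isUnit (T : X → X) {N : X → Matrix m m ℝ} (h : ∀ y, IsUnit (N y)) (k : ℕ) (x : X) :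
    IsUnit (cocycle T N k x) := by
  induction k generalizing x with
  | zero => exact isUnit_one
  | succ k ih => exact (ih (T x)).mul (h x)

lemma opNorm_cocycle_shift_le (T : X → X) {N : X → Matrix m m ℝ} (h : ∀ y, IsUnit (N y))
    (a b : ℕ) (x : X) :
    opNorm (cocycle T N a (T^[b] x))
      ≤ opNorm (cocycle T N (a + b) x) * opNorm ((cocycle T N b x)⁻¹) := by
  have hu : IsUnit (cocycle T N b x).det :=
    (Matrix.isUnit_iff_isUnit_det _).1 (cocycle_isUnit T h b x)
  have key : cocycle T N a (T^[b] x) = cocycle T N (a + b) x * (cocycle T N b x)⁻¹ := by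
    rw [cocycle_add, mul_assoc, Matrix.mul_nonsing_inv _ hu, mul_one]
  rw [key]
  exact opNorm_mul_le _ _

noncomputable def offC (T : X → X) (F : X → Matrix m m ℝ) (G : X → Matrix n n ℝ)
    (Bf : X → Matrix m n ℝ) (k : ℕ) (x : X) : Matrix m n ℝ :=
  ∑ j ∈ Finset.range k, cocycle T F (k - 1 - j) (T^[j+1] x) * Bf (T^[j] x) * cocycle T G j x

lemma cocycle_fromBlocks (T : X → X) (F : X → Matrix m m ℝ) (G : X → Matrix n n ℝ)
    (Bf : X → Matrix m n ℝ) (k : ℕ) (x : X) :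
    cocycle T (fun y => Matrix.fromBlocks (F y) (Bf y) 0 (G y)) k x
      = Matrix.fromBlocks (cocycle T F k x) (offC T F G Bf k x) 0 (cocycle T G k x) := by
  induction k generalizing x with
  | zero => simp [cocycle, offC, Matrix.fromBlocks_one]
  | succ k ih =>
      have hstep : cocycle T (fun y => Matrix.fromBlocks (F y) (Bf y) 0 (G y)) (k+1) x
          = cocycle T (fun y => Matrix.fromBlocks (F y) (Bf y) 0 (G y)) k (T x)
            * Matrix.fromBlocks (F x) (Bf x) 0 (G x) := rfl
      rw [hstep, ih (T x), Matrix.fromBlocks_multiply]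
      have hC : offC T F G Bf (k+1) x
          = offC T F G Bf k (T x) * G x + cocycle T F k (T x) * Bf x := by
        unfold offC
        rw [Finset.sum_range_succ']
        congr 1
        · rw [Matrix.sum_mul]
          refine Finset.sum_congr rfl fun j hj => ?_
          have h1 : k + 1 - 1 - (j + 1) = k - 1 - j := by omega
          have h2 : T^[j+1+1] x = T^[j+1] (T x) := Function.iterate_succ_apply T (j+1) x
          have h3 : T^[j+1] x = T^[j] (T x) := Function.iterate_succ_apply T j x
          rw [h1, h2, h3, show cocycle T G (j+1) x = cocycle T G j (T x) * G x from rfl]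
          simp [Matrix.mul_assoc]
        · simp [cocycle]
      rw [hC.trans (add_comm _ _)]
      simp [cocycle]
lemma offC_opNorm_le (T : X → X) (F : X → Matrix m m ℝ) (G : X → Matrix n n ℝ)
    (Bf : X → Matrix m n ℝ) (k : ℕ) (x : X) :
    opNorm (offC T F G Bf k x)
      ≤ ∑ j ∈ Finset.range k, opNorm (cocycle T F (k - 1 - j) (T^[j+1] x))
          * opNorm (Bf (T^[j] x)) * opNorm (cocycle T G j x) := by
  refine le_trans (opNorm_sum_le _ _) (Finset.sum_le_sum fun j _ => ?_)
  calc opNorm (cocycle T F (k - 1 - j) (T^[j+1] x) * Bf (T^[j] x) * cocycle T G j x)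
      ≤ opNorm (cocycle T F (k - 1 - j) (T^[j+1] x) * Bf (T^[j] x)) * opNorm (cocycle T G j x) :=
        opNorm_mul_le _ _
    _ ≤ opNorm (cocycle T F (k - 1 - j) (T^[j+1] x)) * opNorm (Bf (T^[j] x))
        * opNorm (cocycle T G j x) :=
        mul_le_mul_of_nonneg_right (opNorm_mul_le _ _) (opNorm_nonneg _)

end Cocycle

section Analysis

lemma exists_ub_of_tendsto {u : ℕ → ℝ} (hpos : ∀ k, 0 < u k) {l : ℝ}
    (h : Filter.Tendsto (fun k : ℕ => Real.log (u k) / k) atTop (nhds l)) {ε : ℝ} (hε : 0 < ε) :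
    ∃ K > 0, ∀ k : ℕ, u k ≤ K * Real.exp ((l + ε) * k) := by
  have hev : ∀ᶠ k : ℕ in atTop, Real.log (u k) / k < l + ε :=
    h.eventually (gt_mem_nhds (by linarith))
  obtain ⟨N, hN⟩ := Filter.eventually_atTop.1 hev
  set K : ℝ := 1 + ∑ j ∈ Finset.range (N + 1), u j * Real.exp (-((l + ε) * j)) with hK
  have hsum0 : 0 ≤ ∑ j ∈ Finset.range (N + 1), u j * Real.exp (-((l + ε) * j)) :=
    Finset.sum_nonneg fun j _ => mul_nonneg (hpos j).le (Real.exp_pos _).le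
  have hK1 : 1 ≤ K := by rw [hK]; linarith
  refine ⟨K, by linarith, fun k => ?_⟩
  rcases lt_or_ge k (N + 1) with hk | hk
  · have hterm : u k * Real.exp (-((l + ε) * k))
        ≤ ∑ j ∈ Finset.range (N + 1), u j * Real.exp (-((l + ε) * j)) :=
      Finset.single_le_sum (f := fun j => u j * Real.exp (-((l + ε) * j)))
        (fun j _ => mul_nonneg (hpos j).le (Real.exp_pos _).le) (Finset.mem_range.2 hk)
    calc u k = u k * Real.exp (-((l + ε) * k)) * Real.exp ((l + ε) * k) := by
          rw [mul_assoc, ← Real.exp_add]; simp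
      _ ≤ K * Real.exp ((l + ε) * k) := by
          have : u k * Real.exp (-((l + ε) * k)) ≤ K := by rw [hK]; linarith
          exact mul_le_mul_of_nonneg_right this (Real.exp_pos _).le
  · have hkN : N ≤ k := by omega
    have hk1 : (1 : ℝ) ≤ (k : ℝ) := by exact_mod_cast Nat.one_le_iff_ne_zero.2 (by omega)
    have hk0 : (0 : ℝ) < (k : ℝ) := by linarith
    have hlt := hN k hkN
    have hlog : Real.log (u k) < (l + ε) * k := by
      have := (div_lt_iff₀ hk0).1 hlt
      linarith
    have hexp : u k < Real.exp ((l + ε) * k) := by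
      calc u k = Real.exp (Real.log (u k)) := (Real.exp_log (hpos k)).symm
        _ < Real.exp ((l + ε) * k) := Real.exp_lt_exp.2 hlog
    calc u k ≤ Real.exp ((l + ε) * k) := hexp.le
      _ ≤ K * Real.exp ((l + ε) * k) := le_mul_of_one_le_left (Real.exp_pos _).le hK1

lemma exists_lb_of_tendsto {u : ℕ → ℝ} (hpos : ∀ k, 0 < u k) {l : ℝ}
    (h : Filter.Tendsto (fun k : ℕ => Real.log (u k) / k) atTop (nhds l)) {ε : ℝ} (hε : 0 < ε) :
    ∃ K > 0, ∀ k : ℕ, K * Real.exp ((l - ε) * k) ≤ u k := by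
  have hinv : Filter.Tendsto (fun k : ℕ => Real.log ((u k)⁻¹) / k) atTop (nhds (-l)) := by
    have : (fun k : ℕ => Real.log ((u k)⁻¹) / k)
        = fun k : ℕ => -(Real.log (u k) / k) := by
      funext k; rw [Real.log_inv, neg_div]
    rw [this]
    exact h.neg
  obtain ⟨K, hK, hb⟩ := exists_ub_of_tendsto (fun k => inv_pos.2 (hpos k)) hinv hε
  refine ⟨K⁻¹, inv_pos.2 hK, fun k => ?_⟩
  have h1 : (u k)⁻¹ ≤ K * Real.exp ((-l + ε) * k) := hb k
  have h2 : Real.exp ((-l + ε) * k) = (Real.exp ((l - ε) * k))⁻¹ := by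
    rw [← Real.exp_neg]; ring_nf
  rw [h2] at h1
  have h3 : (K * (Real.exp ((l - ε) * k))⁻¹)⁻¹ ≤ ((u k)⁻¹)⁻¹ :=
    inv_anti₀ (inv_pos.2 (hpos k)) h1
  rw [inv_inv, mul_inv, inv_inv] at h3
  exact h3

lemma tendsto_log_div_of_bounds {u : ℕ → ℝ} (hpos : ∀ k, 0 < u k) (l : ℝ)
    (hub : ∀ ε > (0:ℝ), ∃ K > (0:ℝ), ∀ k : ℕ, u k ≤ K * Real.exp ((l + ε) * k))
    (hlb : ∀ ε > (0:ℝ), ∃ K > (0:ℝ), ∀ k : ℕ, K * Real.exp ((l - ε) * k) ≤ u k) :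
    Filter.Tendsto (fun k : ℕ => Real.log (u k) / k) atTop (nhds l) := by
  refine tendsto_order.2 ⟨fun c hc => ?_, fun c hc => ?_⟩
  · set ε : ℝ := (l - c) / 2 with hε
    obtain ⟨K, hK, hb⟩ := hlb ε (by rw [hε]; linarith)
    have h0 : Filter.Tendsto (fun k : ℕ => Real.log K / k) atTop (nhds 0) :=
      tendsto_const_div_atTop_nhds_zero_nat _
    have hev : ∀ᶠ k : ℕ in atTop, -ε < Real.log K / k :=
      h0.eventually (lt_mem_nhds (by linarith))
    filter_upwards [hev, Filter.eventually_ge_atTop 1] with k hk1 hk2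
    have hk0 : (0 : ℝ) < (k : ℝ) := by exact_mod_cast Nat.pos_of_ne_zero (by omega)
    have hlog : Real.log K + (l - ε) * k ≤ Real.log (u k) := by
      have := hb k
      calc Real.log K + (l - ε) * k = Real.log (K * Real.exp ((l - ε) * k)) := by
            rw [Real.log_mul (ne_of_gt hK) (Real.exp_ne_zero _), Real.log_exp]
        _ ≤ Real.log (u k) := Real.log_le_log (by positivity) (hb k)
    have : (Real.log K + (l - ε) * k) / k ≤ Real.log (u k) / k := by gcongr
    rw [add_div, mul_div_assoc, div_self (ne_of_gt hk0), mul_one] at this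
    calc c = -ε + (l - ε) := by rw [hε]; ring
      _ < Real.log K / k + (l - ε) := by linarith
      _ ≤ Real.log (u k) / k := this
  · set ε : ℝ := (c - l) / 2 with hε
    obtain ⟨K, hK, hb⟩ := hub ε (by rw [hε]; linarith)
    have h0 : Filter.Tendsto (fun k : ℕ => Real.log K / k) atTop (nhds 0) :=
      tendsto_const_div_atTop_nhds_zero_nat _
    have hev : ∀ᶠ k : ℕ in atTop, Real.log K / k < ε :=
      h0.eventually (gt_mem_nhds (by linarith))
    filter_upwards [hev, Filter.eventually_ge_atTop 1] with k hk1 hk2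
    have hk0 : (0 : ℝ) < (k : ℝ) := by exact_mod_cast Nat.pos_of_ne_zero (by omega)
    have hlog : Real.log (u k) ≤ Real.log K + (l + ε) * k := by
      calc Real.log (u k) ≤ Real.log (K * Real.exp ((l + ε) * k)) :=
            Real.log_le_log (hpos k) (hb k)
        _ = Real.log K + (l + ε) * k := by
            rw [Real.log_mul (ne_of_gt hK) (Real.exp_ne_zero _), Real.log_exp]
    have : Real.log (u k) / k ≤ (Real.log K + (l + ε) * k) / k := by gcongr
    rw [add_div, mul_div_assoc, div_self (ne_of_gt hk0), mul_one] at this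
    calc Real.log (u k) / k ≤ Real.log K / k + (l + ε) := this
      _ < ε + (l + ε) := by linarith
      _ = c := by rw [hε]; ring

lemma nat_add_one_le_exp {δ : ℝ} (hδ : 0 < δ) (k : ℕ) :
    (k : ℝ) + 1 ≤ (1 + 1 / δ) * Real.exp (δ * k) := by
  have h1 : (1: ℝ) ≤ Real.exp (δ * k) := Real.one_le_exp (by positivity)
  have h2 : δ * k + 1 ≤ Real.exp (δ * k) := Real.add_one_le_exp _
  have h3 : (1 / δ) * Real.exp (δ * k) ≥ (1 / δ) * (δ * k + 1) :=
    mul_le_mul_of_nonneg_left h2 (by positivity)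
  have h4 : (1 / δ) * (δ * k + 1) = (k : ℝ) + 1 / δ := by field_simp
  have h5 : (0:ℝ) < 1 / δ := by positivity
  have h6 : (0:ℝ) < Real.exp (δ * k) := Real.exp_pos _
  nlinarith

end Analysis

section Orbit

lemma tsum_meas_le_lintegral_aux {X : Type*} [MeasurableSpace X] (μ : MeasureTheory.Measure X)
    {g : X → ℝ} (hgm : Measurable g) (hg0 : ∀ x, 0 ≤ g x) (hgi : MeasureTheory.Integrable g μ)
    {ε : ℝ} (hε : 0 < ε) :
    ∑' k : ℕ, μ {y | ε * (k + 1) ≤ g y} ≠ ⊤ := by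
  have hs : ∀ k : ℕ, MeasurableSet {y | ε * (k + 1) ≤ g y} :=
    fun k => measurableSet_le measurable_const hgm
  have h1 : ∑' k : ℕ, μ {y | ε * (k + 1) ≤ g y}
      = ∫⁻ y, ∑' k : ℕ, ({y | ε * (k + 1) ≤ g y}).indicator (fun _ => (1 : ENNReal)) y ∂μ := by
    rw [MeasureTheory.lintegral_tsum
      (fun k => (measurable_const.indicator (hs k)).aemeasurable)]
    exact tsum_congr fun k => (MeasureTheory.lintegral_indicator_one (hs k)).symm
  have h2 : ∀ y, ∑' k : ℕ, ({y | ε * (k + 1) ≤ g y}).indicator (fun _ => (1 : ENNReal)) y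
      ≤ ENNReal.ofReal (g y / ε) := by
    intro y
    set N : ℕ := ⌊g y / ε⌋₊ with hN
    have hge : 0 ≤ g y / ε := div_nonneg (hg0 y) hε.le
    have hmem : ∀ k : ℕ, (y ∈ {y | ε * (k + 1) ≤ g y}) ↔ k < N := by
      intro k
      simp only [Set.mem_setOf_eq, hN]
      rw [show (k < ⌊g y / ε⌋₊) ↔ (k + 1 ≤ ⌊g y / ε⌋₊) from Iff.rfl, Nat.le_floor_iff hge]
      constructor
      · intro h
        rw [le_div_iff₀ hε]
        push_cast
        linarith
      · intro h
        rw [le_div_iff₀ hε] at h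
        push_cast at h; linarith
    have heq : ∀ k : ℕ, ({y | ε * (k + 1) ≤ g y}).indicator (fun _ => (1 : ENNReal)) y
        = if k < N then (1 : ENNReal) else 0 := by
      intro k
      by_cases h : y ∈ {y | ε * (k + 1) ≤ g y}
      · rw [Set.indicator_of_mem h, if_pos ((hmem k).1 h)]
      · rw [Set.indicator_of_notMem h, if_neg (fun hc => h ((hmem k).2 hc))]
    calc ∑' k : ℕ, ({y | ε * (k + 1) ≤ g y}).indicator (fun _ => (1 : ENNReal)) y
        = ∑' k : ℕ, if k < N then (1 : ENNReal) else 0 := tsum_congr heq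
      _ = ∑ k ∈ Finset.range N, if k < N then (1 : ENNReal) else 0 := by
          refine tsum_eq_sum fun k hk => ?_
          rw [if_neg]
          simpa using hk
      _ = (N : ENNReal) := by
          rw [Finset.sum_congr rfl fun k hk => if_pos (Finset.mem_range.1 hk)]
          simp
      _ ≤ ENNReal.ofReal (g y / ε) := by
          rw [← ENNReal.ofReal_natCast N]
          exact ENNReal.ofReal_le_ofReal (Nat.floor_le hge)
  rw [h1]
  refine ne_top_of_le_ne_top ?_ (MeasureTheory.lintegral_mono h2)
  exact (MeasureTheory.Integrable.lintegral_lt_top (hgi.div_const ε)).ne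

lemma orbit_sublinear {X : Type*} [MeasurableSpace X] (μ : MeasureTheory.Measure X)
    [MeasureTheory.IsProbabilityMeasure μ] {T : X → X}
    (hT : MeasureTheory.MeasurePreserving T μ μ) {g : X → ℝ} (hgm : Measurable g)
    (hg0 : ∀ x, 0 ≤ g x) (hgi : MeasureTheory.Integrable g μ) :
    ∀ᵐ x ∂μ, Filter.Tendsto (fun k : ℕ => g (T^[k] x) / k) atTop (nhds 0) := by
  have key : ∀ j : ℕ, ∀ᵐ x ∂μ, ∀ᶠ k : ℕ in atTop,
      g (T^[k] x) < (1 / ((j : ℝ) + 1)) * (k + 1) := by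
    intro j
    set ε : ℝ := 1 / ((j : ℝ) + 1) with hε
    have hε0 : 0 < ε := by rw [hε]; positivity
    have hs : ∀ k : ℕ, MeasurableSet {y | ε * (k + 1) ≤ g y} :=
      fun k => measurableSet_le measurable_const hgm
    have hμs : ∀ k : ℕ, μ (T^[k] ⁻¹' {y | ε * (k + 1) ≤ g y}) = μ {y | ε * (k + 1) ≤ g y} :=
      fun k => (hT.iterate k).measure_preimage (hs k).nullMeasurableSet
    have hsum : ∑' k : ℕ, μ (T^[k] ⁻¹' {y | ε * (k + 1) ≤ g y}) ≠ ⊤ := by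
      rw [tsum_congr hμs]
      exact tsum_meas_le_lintegral_aux μ hgm hg0 hgi hε0
    have hBC := MeasureTheory.measure_setOf_frequently_eq_zero
      (p := fun k x => x ∈ T^[k] ⁻¹' {y | ε * (k + 1) ≤ g y}) hsum
    have : ∀ᵐ x ∂μ, ¬ (∃ᶠ k : ℕ in atTop, x ∈ T^[k] ⁻¹' {y | ε * (k + 1) ≤ g y}) := by
      rw [MeasureTheory.ae_iff]
      simpa only [not_not] using hBC
    filter_upwards [this] with x hx
    rw [Filter.not_frequently] at hx
    filter_upwards [hx] with k hk
    simp only [Set.mem_preimage, Set.mem_setOf_eq, not_le] at hk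
    exact hk
  have hall : ∀ᵐ x ∂μ, ∀ j : ℕ, ∀ᶠ k : ℕ in atTop,
      g (T^[k] x) < (1 / ((j : ℝ) + 1)) * (k + 1) := (MeasureTheory.ae_all_iff).2 key
  filter_upwards [hall] with x hx
  refine tendsto_order.2 ⟨fun c hc => ?_, fun c hc => ?_⟩
  · refine Filter.Eventually.of_forall fun k => lt_of_lt_of_le hc ?_
    exact div_nonneg (hg0 _) (Nat.cast_nonneg k)
  · obtain ⟨j, hj⟩ := exists_nat_gt (2 / c)
    have hc0 : (0 : ℝ) < c := hc
    have hj1 : 2 / c < (j : ℝ) + 1 := by linarith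
    have hj0 : (0 : ℝ) < (j : ℝ) + 1 := by positivity
    have h2c : 2 / ((j : ℝ) + 1) < c := by
      rw [div_lt_iff₀ hj0]
      rw [div_lt_iff₀ hc0] at hj1
      linarith
    filter_upwards [hx j, Filter.eventually_ge_atTop 1] with k h1 h2
    have hk1 : (1 : ℝ) ≤ (k : ℝ) := by exact_mod_cast h2
    have hk0 : (0 : ℝ) < (k : ℝ) := by linarith
    rw [div_lt_iff₀ hk0]
    have h3 : (k : ℝ) + 1 ≤ 2 * k := by linarith
    have h4 : (1 / ((j : ℝ) + 1)) * ((k : ℝ) + 1) ≤ (1 / ((j : ℝ) + 1)) * (2 * k) :=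
      mul_le_mul_of_nonneg_left h3 (by positivity)
    have h5 : (1 / ((j : ℝ) + 1)) * (2 * (k : ℝ)) = (2 / ((j : ℝ) + 1)) * k := by ring
    have h6 : (2 / ((j : ℝ) + 1)) * k < c * k := mul_lt_mul_of_pos_right h2c hk0
    linarith [h1]

end Orbit

section DetMain

lemma log_max_one {b : ℝ} (hb : 0 ≤ b) : Real.log (max b 1) = max (Real.log b) 0 := by
  rcases le_total b 1 with h | h
  · rw [max_eq_right h, Real.log_one, max_eq_right (Real.log_nonpos hb h)]
  · rw [max_eq_left h, max_eq_left (Real.log_nonneg h)]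

lemma isUnit_nonsing_inv' {m : Type*} [Fintype m] [DecidableEq m] {A : Matrix m m ℝ}
    (h : IsUnit A) : IsUnit A⁻¹ :=
  Matrix.isUnit_nonsing_inv_iff.2 h

lemma det_main {X : Type*} {m n : Type*} [Fintype m] [Fintype n] [DecidableEq m] [DecidableEq n]
    [Nonempty m] [Nonempty n]
    (T : X → X) (F : X → Matrix m m ℝ) (G : X → Matrix n n ℝ) (Bf : X → Matrix m n ℝ)
    (hFu : ∀ y, IsUnit (F y)) (hGu : ∀ y, IsUnit (G y)) (lam : ℝ) (x : X)
    (h1 : Filter.Tendsto (fun k : ℕ => Real.log (opNorm (cocycle T F k x)) / k) atTop (nhds lam))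
    (h1' : Filter.Tendsto (fun k : ℕ => Real.log (opNorm ((cocycle T F k x)⁻¹)) / k)
      atTop (nhds (-lam)))
    (h2 : Filter.Tendsto (fun k : ℕ => Real.log (opNorm (cocycle T G k x)) / k) atTop (nhds lam))
    (h2' : Filter.Tendsto (fun k : ℕ => Real.log (opNorm ((cocycle T G k x)⁻¹)) / k)
      atTop (nhds (-lam)))
    (h3 : Filter.Tendsto (fun k : ℕ => max (Real.log (opNorm (Bf (T^[k] x)))) 0 / k)
      atTop (nhds 0)) :
    Filter.Tendsto (fun k : ℕ => Real.log (opNorm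
      (cocycle T (fun y => Matrix.fromBlocks (F y) (Bf y) 0 (G y)) k x)) / k)
      atTop (nhds lam) ∧
    Filter.Tendsto (fun k : ℕ => Real.log (opNorm
      ((cocycle T (fun y => Matrix.fromBlocks (F y) (Bf y) 0 (G y)) k x)⁻¹)) / k)
      atTop (nhds (-lam)) := by
  -- units and positivity
  have hMu : ∀ y, IsUnit (Matrix.fromBlocks (F y) (Bf y) 0 (G y)) := by
    intro y
    rw [Matrix.isUnit_iff_isUnit_det, Matrix.det_fromBlocks_zero₂₁]
    exact ((Matrix.isUnit_iff_isUnit_det _).1 (hFu y)).mul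
      ((Matrix.isUnit_iff_isUnit_det _).1 (hGu y))
  have hFun : ∀ k, IsUnit (cocycle T F k x) := fun k => cocycle_isUnit T hFu k x
  have hGun : ∀ k, IsUnit (cocycle T G k x) := fun k => cocycle_isUnit T hGu k x
  have hMun : ∀ k, IsUnit (cocycle T (fun y => Matrix.fromBlocks (F y) (Bf y) 0 (G y)) k x) :=
    fun k => cocycle_isUnit T hMu k x
  have hpos1 : ∀ k, 0 < opNorm (cocycle T F k x) := fun k => opNorm_pos_of_isUnit (hFun k)
  have hpos1' : ∀ k, 0 < opNorm ((cocycle T F k x)⁻¹) :=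
    fun k => opNorm_pos_of_isUnit (isUnit_nonsing_inv' (hFun k))
  have hpos2 : ∀ k, 0 < opNorm (cocycle T G k x) := fun k => opNorm_pos_of_isUnit (hGun k)
  have hpos2' : ∀ k, 0 < opNorm ((cocycle T G k x)⁻¹) :=
    fun k => opNorm_pos_of_isUnit (isUnit_nonsing_inv' (hGun k))
  have hposM : ∀ k, 0 < opNorm (cocycle T (fun y => Matrix.fromBlocks (F y) (Bf y) 0 (G y)) k x) :=
    fun k => opNorm_pos_of_isUnit (hMun k)
  have hposM' : ∀ k, 0 < opNorm
      ((cocycle T (fun y => Matrix.fromBlocks (F y) (Bf y) 0 (G y)) k x)⁻¹) :=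
    fun k => opNorm_pos_of_isUnit (isUnit_nonsing_inv' (hMun k))
  -- block decomposition of the cocycle and its inverse
  have hMrw : ∀ k, cocycle T (fun y => Matrix.fromBlocks (F y) (Bf y) 0 (G y)) k x
      = Matrix.fromBlocks (cocycle T F k x) (offC T F G Bf k x) 0 (cocycle T G k x) :=
    fun k => cocycle_fromBlocks T F G Bf k x
  have hMinv : ∀ k, (cocycle T (fun y => Matrix.fromBlocks (F y) (Bf y) 0 (G y)) k x)⁻¹
      = Matrix.fromBlocks ((cocycle T F k x)⁻¹)
          (-((cocycle T F k x)⁻¹ * offC T F G Bf k x * (cocycle T G k x)⁻¹)) 0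
          ((cocycle T G k x)⁻¹) := by
    intro k
    rw [hMrw k]
    exact Matrix.inv_fromBlocks_zero₂₁_of_isUnit_iff _ _ _ (iff_of_true (hFun k) (hGun k))
  -- dimension constant
  set D : ℝ := ((Fintype.card m + Fintype.card n : ℕ) : ℝ) ^ 2 with hD
  have hD0 : 0 < D := by
    rw [hD]
    have h : 0 < (Fintype.card m + Fintype.card n : ℕ) :=
      Nat.add_pos_left Fintype.card_pos _
    exact pow_pos (by exact_mod_cast h) 2
  -- bound on B along the orbit
  have hBten : Filter.Tendsto (fun k : ℕ => Real.log (max (opNorm (Bf (T^[k] x))) 1) / k)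
      atTop (nhds 0) := by
    have heq : (fun k : ℕ => Real.log (max (opNorm (Bf (T^[k] x))) 1) / k)
        = fun k : ℕ => max (Real.log (opNorm (Bf (T^[k] x)))) 0 / k := by
      funext k; rw [log_max_one (opNorm_nonneg _)]
    rw [heq]; exact h3
  have hBpos : ∀ k : ℕ, (0:ℝ) < max (opNorm (Bf (T^[k] x))) 1 :=
    fun k => lt_of_lt_of_le one_pos (le_max_right _ _)
  -- the key bound on the off-diagonal block
  have hCbound : ∀ ε > (0:ℝ), ∃ K > (0:ℝ), ∀ k : ℕ,
      opNorm (offC T F G Bf k x) ≤ K * Real.exp ((lam + ε) * k) := by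
    intro ε hε
    set δ : ℝ := ε / 5 with hδ
    have hδ0 : 0 < δ := by rw [hδ]; linarith
    obtain ⟨K₁, hK₁, hb₁⟩ := exists_ub_of_tendsto hpos1 h1 hδ0
    obtain ⟨K₁', hK₁', hb₁'⟩ := exists_ub_of_tendsto hpos1' h1' hδ0
    obtain ⟨K₂, hK₂, hb₂⟩ := exists_ub_of_tendsto hpos2 h2 hδ0
    obtain ⟨KB, hKB, hbB⟩ := exists_ub_of_tendsto hBpos hBten hδ0
    set Kc : ℝ := K₁ * K₁' * KB * K₂ * Real.exp (|lam| + δ) with hKc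
    have hKc0 : 0 < Kc := by rw [hKc]; positivity
    refine ⟨Kc * (1 + 1 / δ), by positivity, fun k => ?_⟩
    have hterm : ∀ j ∈ Finset.range k,
        opNorm (cocycle T F (k - 1 - j) (T^[j+1] x)) * opNorm (Bf (T^[j] x))
            * opNorm (cocycle T G j x)
          ≤ Kc * Real.exp ((lam + 4*δ) * k) := by
      intro j hj
      have hjk : j < k := Finset.mem_range.1 hj
      have hsplit : (k - 1 - j) + (j + 1) = k := by omega
      have b1 : opNorm (cocycle T F (k - 1 - j) (T^[j+1] x))
          ≤ K₁ * Real.exp ((lam + δ) * k) * (K₁' * Real.exp ((-lam + δ) * (j+1 : ℕ))) := by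
        have hshift := opNorm_cocycle_shift_le T hFu (k - 1 - j) (j + 1) x
        rw [hsplit] at hshift
        refine le_trans hshift ?_
        exact mul_le_mul (hb₁ k) (hb₁' (j+1)) (opNorm_nonneg _) (by positivity)
      have b2 : opNorm (Bf (T^[j] x)) ≤ KB * Real.exp ((0 + δ) * j) :=
        le_trans (le_max_left _ _) (hbB j)
      have b3 := hb₂ j
      have big : opNorm (cocycle T F (k - 1 - j) (T^[j+1] x)) * opNorm (Bf (T^[j] x))
            * opNorm (cocycle T G j x)
          ≤ (K₁ * Real.exp ((lam + δ) * k) * (K₁' * Real.exp ((-lam + δ) * (j+1 : ℕ))))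
            * (KB * Real.exp ((0 + δ) * j)) * (K₂ * Real.exp ((lam + δ) * j)) :=
        mul_le_mul (mul_le_mul b1 b2 (opNorm_nonneg _) (by positivity)) b3
          (opNorm_nonneg _) (by positivity)
      refine le_trans big ?_
      have hexp_eq : (K₁ * Real.exp ((lam + δ) * k) * (K₁' * Real.exp ((-lam + δ) * (j+1 : ℕ))))
            * (KB * Real.exp ((0 + δ) * j)) * (K₂ * Real.exp ((lam + δ) * j))
          = (K₁ * K₁' * KB * K₂) * Real.exp ((lam + δ) * k + (-lam + δ) * (j+1 : ℕ)
              + (0 + δ) * j + (lam + δ) * j) := by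
        rw [Real.exp_add, Real.exp_add, Real.exp_add]; ring
      rw [hexp_eq]
      have hE : (lam + δ) * k + (-lam + δ) * ((j:ℕ)+1 : ℕ) + (0 + δ) * j + (lam + δ) * j
          ≤ (|lam| + δ) + (lam + 4*δ) * k := by
        have hjk' : (j : ℝ) ≤ k := by exact_mod_cast hjk.le
        have hdj : δ * (j : ℝ) ≤ δ * k := mul_le_mul_of_nonneg_left hjk' hδ0.le
        have habs : -lam ≤ |lam| := neg_le_abs lam
        push_cast
        nlinarith [hdj, habs]
      calc (K₁ * K₁' * KB * K₂) * Real.exp ((lam + δ) * k + (-lam + δ) * (j+1 : ℕ)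
              + (0 + δ) * j + (lam + δ) * j)
          ≤ (K₁ * K₁' * KB * K₂) * Real.exp ((|lam| + δ) + (lam + 4*δ) * k) := by
            refine mul_le_mul_of_nonneg_left (Real.exp_le_exp.2 ?_) (by positivity)
            exact_mod_cast hE
        _ = Kc * Real.exp ((lam + 4*δ) * k) := by rw [hKc, Real.exp_add]; ring
    have hsum : opNorm (offC T F G Bf k x) ≤ (k : ℝ) * (Kc * Real.exp ((lam + 4*δ) * k)) := by
      refine le_trans (offC_opNorm_le T F G Bf k x) ?_
      refine le_trans (Finset.sum_le_sum hterm) ?_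
      rw [Finset.sum_const, Finset.card_range]
      simp [nsmul_eq_mul]
    refine le_trans hsum ?_
    have hY : (0:ℝ) ≤ Kc * Real.exp ((lam + 4*δ) * k) := by positivity
    have h1n : (k : ℝ) ≤ (1 + 1/δ) * Real.exp (δ * k) := by
      have := nat_add_one_le_exp hδ0 k
      linarith
    calc (k : ℝ) * (Kc * Real.exp ((lam + 4*δ) * k))
        ≤ ((1 + 1/δ) * Real.exp (δ * k)) * (Kc * Real.exp ((lam + 4*δ) * k)) :=
          mul_le_mul_of_nonneg_right h1n hY
      _ = Kc * (1 + 1/δ) * Real.exp ((lam + ε) * k) := by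
          rw [show (lam + ε) * (k:ℝ) = δ * k + (lam + 4*δ) * k from by rw [hδ]; ring,
            Real.exp_add]
          ring
  constructor
  · -- forward part
    refine tendsto_log_div_of_bounds hposM lam (fun ε hε => ?_) (fun ε hε => ?_)
    · obtain ⟨K₁, hK₁, hb₁⟩ := exists_ub_of_tendsto hpos1 h1 hε
      obtain ⟨K₂, hK₂, hb₂⟩ := exists_ub_of_tendsto hpos2 h2 hε
      obtain ⟨KC, hKC, hbC⟩ := hCbound ε hε
      refine ⟨D * (K₁ + KC + K₂), by positivity, fun k => ?_⟩
      rw [hMrw k]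
      refine le_trans (opNorm_fromBlocks_le _ _ _ _) ?_
      rw [← hD, opNorm_zero]
      have : opNorm (cocycle T F k x) + opNorm (offC T F G Bf k x) + 0
            + opNorm (cocycle T G k x)
          ≤ (K₁ + KC + K₂) * Real.exp ((lam + ε) * k) := by
        have e1 := hb₁ k
        have e2 := hbC k
        have e3 := hb₂ k
        have h0 : (0:ℝ) < Real.exp ((lam + ε) * k) := Real.exp_pos _
        nlinarith [e1, e2, e3]
      calc D * (opNorm (cocycle T F k x) + opNorm (offC T F G Bf k x) + 0
            + opNorm (cocycle T G k x))
          ≤ D * ((K₁ + KC + K₂) * Real.exp ((lam + ε) * k)) :=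
            mul_le_mul_of_nonneg_left this hD0.le
        _ = D * (K₁ + KC + K₂) * Real.exp ((lam + ε) * k) := by ring
    · obtain ⟨K₁, hK₁, hb₁⟩ := exists_lb_of_tendsto hpos1 h1 hε
      refine ⟨K₁ / D, by positivity, fun k => ?_⟩
      have hle : opNorm (cocycle T F k x)
          ≤ D * opNorm (cocycle T (fun y => Matrix.fromBlocks (F y) (Bf y) 0 (G y)) k x) := by
        rw [hMrw k]
        exact opNorm_le_fromBlocks₁₁ _ _ _ _
      have := hb₁ k
      rw [div_mul_eq_mul_div, div_le_iff₀ hD0]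
      calc K₁ * Real.exp ((lam - ε) * k) ≤ opNorm (cocycle T F k x) := hb₁ k
        _ ≤ opNorm (cocycle T (fun y => Matrix.fromBlocks (F y) (Bf y) 0 (G y)) k x) * D := by
            rw [mul_comm]; exact hle
  · -- inverse part
    refine tendsto_log_div_of_bounds hposM' (-lam) (fun ε hε => ?_) (fun ε hε => ?_)
    · set δ : ℝ := ε / 3 with hδ
      have hδ0 : 0 < δ := by rw [hδ]; linarith
      obtain ⟨K₁', hK₁', hb₁'⟩ := exists_ub_of_tendsto hpos1' h1' hδ0
      obtain ⟨K₂', hK₂', hb₂'⟩ := exists_ub_of_tendsto hpos2' h2' hδ0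
      obtain ⟨KC, hKC, hbC⟩ := hCbound δ hδ0
      refine ⟨D * (K₁' + K₁' * KC * K₂' + K₂'), by positivity, fun k => ?_⟩
      rw [hMinv k]
      refine le_trans (opNorm_fromBlocks_le _ _ _ _) ?_
      rw [← hD, opNorm_zero, opNorm_neg]
      have hmid : opNorm ((cocycle T F k x)⁻¹ * offC T F G Bf k x * (cocycle T G k x)⁻¹)
          ≤ (K₁' * KC * K₂') * Real.exp ((-lam + ε) * k) := by
        have s1 : opNorm ((cocycle T F k x)⁻¹ * offC T F G Bf k x * (cocycle T G k x)⁻¹)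
            ≤ opNorm ((cocycle T F k x)⁻¹) * opNorm (offC T F G Bf k x)
              * opNorm ((cocycle T G k x)⁻¹) := by
          refine le_trans (opNorm_mul_le _ _) ?_
          exact mul_le_mul_of_nonneg_right (opNorm_mul_le _ _) (opNorm_nonneg _)
        refine le_trans s1 ?_
        have e1 := hb₁' k
        have e2 := hbC k
        have e3 := hb₂' k
        calc opNorm ((cocycle T F k x)⁻¹) * opNorm (offC T F G Bf k x)
              * opNorm ((cocycle T G k x)⁻¹)
            ≤ (K₁' * Real.exp ((-lam + δ) * k)) * (KC * Real.exp ((lam + δ) * k))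
              * (K₂' * Real.exp ((-lam + δ) * k)) :=
              mul_le_mul (mul_le_mul e1 e2 (opNorm_nonneg _) (by positivity)) e3
                (opNorm_nonneg _) (by positivity)
          _ = (K₁' * KC * K₂') * Real.exp ((-lam + δ) * k + (lam + δ) * k + (-lam + δ) * k) := by
              rw [Real.exp_add, Real.exp_add]; ring
          _ = (K₁' * KC * K₂') * Real.exp ((-lam + ε) * k) := by
              rw [show ((-lam + δ) * (k:ℝ) + (lam + δ) * k + (-lam + δ) * k)
                = (-lam + ε) * k from by rw [hδ]; ring]
      have hside : ∀ K' : ℝ, 0 < K' →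
          (∀ kk : ℕ, opNorm ((cocycle T F kk x)⁻¹) ≤ K' * Real.exp ((-lam + δ) * kk)) →
          True := fun _ _ _ => trivial
      have hδε : ∀ kk : ℕ, Real.exp ((-lam + δ) * kk) ≤ Real.exp ((-lam + ε) * kk) := by
        intro kk
        refine Real.exp_le_exp.2 ?_
        have : δ ≤ ε := by rw [hδ]; linarith
        have := mul_le_mul_of_nonneg_right this (Nat.cast_nonneg (α := ℝ) kk)
        nlinarith [Nat.cast_nonneg (α := ℝ) kk]
      have e1 : opNorm ((cocycle T F k x)⁻¹) ≤ K₁' * Real.exp ((-lam + ε) * k) :=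
        le_trans (hb₁' k) (mul_le_mul_of_nonneg_left (hδε k) hK₁'.le)
      have e3 : opNorm ((cocycle T G k x)⁻¹) ≤ K₂' * Real.exp ((-lam + ε) * k) :=
        le_trans (hb₂' k) (mul_le_mul_of_nonneg_left (hδε k) hK₂'.le)
      have : opNorm ((cocycle T F k x)⁻¹)
            + opNorm ((cocycle T F k x)⁻¹ * offC T F G Bf k x * (cocycle T G k x)⁻¹) + 0
            + opNorm ((cocycle T G k x)⁻¹)
          ≤ (K₁' + K₁' * KC * K₂' + K₂') * Real.exp ((-lam + ε) * k) := by
        nlinarith [e1, e3, hmid]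
      calc D * (opNorm ((cocycle T F k x)⁻¹)
            + opNorm ((cocycle T F k x)⁻¹ * offC T F G Bf k x * (cocycle T G k x)⁻¹) + 0
            + opNorm ((cocycle T G k x)⁻¹))
          ≤ D * ((K₁' + K₁' * KC * K₂' + K₂') * Real.exp ((-lam + ε) * k)) :=
            mul_le_mul_of_nonneg_left this hD0.le
        _ = D * (K₁' + K₁' * KC * K₂' + K₂') * Real.exp ((-lam + ε) * k) := by ring
    · obtain ⟨K₁, hK₁, hb₁⟩ := exists_lb_of_tendsto hpos1' h1' hε
      refine ⟨K₁ / D, by positivity, fun k => ?_⟩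
      have hle : opNorm ((cocycle T F k x)⁻¹)
          ≤ D * opNorm ((cocycle T (fun y => Matrix.fromBlocks (F y) (Bf y) 0 (G y)) k x)⁻¹) := by
        rw [hMinv k]
        exact opNorm_le_fromBlocks₁₁ _ _ _ _
      rw [div_mul_eq_mul_div, div_le_iff₀ hD0]
      calc K₁ * Real.exp ((-lam - ε) * k) ≤ opNorm ((cocycle T F k x)⁻¹) := hb₁ k
        _ ≤ opNorm ((cocycle T (fun y => Matrix.fromBlocks (F y) (Bf y) 0 (G y)) k x)⁻¹) * D := by
            rw [mul_comm]; exact hle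

end DetMain

section Final

lemma continuous_opNorm {m n : Type*} [Fintype m] [Fintype n] [DecidableEq n] :
    Continuous fun A : Matrix m n ℝ => opNorm A := by
  have h : Continuous fun A : Matrix m n ℝ =>
      LinearMap.toContinuousLinearMap (Matrix.toEuclideanLin A) :=
    LinearMap.continuous_of_finiteDimensional
      ((Matrix.toEuclideanLin.trans LinearMap.toContinuousLinearMap :
        Matrix m n ℝ ≃ₗ[ℝ] _).toLinearMap)
  exact h.norm


instance matrixOpensMeasurable {m n : Type*} [Countable m] [Countable n] :
    OpensMeasurableSpace (Matrix m n ℝ) :=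
  inferInstanceAs (OpensMeasurableSpace (m → n → ℝ))


end Final

/-- a block upper-triangular cocycle whose two diagonal blocks have all
Lyapunov exponents equal to `λ` also has all Lyapunov exponents equal to `λ`. -/
theorem block_triangular_equal_exponents
    {X : Type*} [MeasurableSpace X] (μ : Measure X) [IsProbabilityMeasure μ]
    (T S : X → X) (hS : Measurable S) (hST : ∀ x, S (T x) = x) (hTS : ∀ x, T (S x) = x)
    (hErg : Ergodic T μ)
    {d₁ d₂ : ℕ} (hd₁ : 1 ≤ d₁) (hd₂ : 1 ≤ d₂)
    (A₁ : X → GL (Fin d₁) ℝ) (A₂ : X → GL (Fin d₂) ℝ)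
    (B : X → Matrix (Fin d₁) (Fin d₂) ℝ)
    (hA₁m : Measurable fun x => (A₁ x : Matrix (Fin d₁) (Fin d₁) ℝ))
    (hA₂m : Measurable fun x => (A₂ x : Matrix (Fin d₂) (Fin d₂) ℝ))
    (hBm : Measurable B)
    (hA₁int : Integrable (fun x => max (Real.log (opNorm ((A₁ x : Matrix (Fin d₁) (Fin d₁) ℝ)))) 0) μ)
    (hA₁invint : Integrable (fun x => max (Real.log (opNorm ((A₁ x : Matrix (Fin d₁) (Fin d₁) ℝ))⁻¹)) 0) μ)
    (hA₂int : Integrable (fun x => max (Real.log (opNorm ((A₂ x : Matrix (Fin d₂) (Fin d₂) ℝ)))) 0) μ)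
    (hA₂invint : Integrable (fun x => max (Real.log (opNorm ((A₂ x : Matrix (Fin d₂) (Fin d₂) ℝ))⁻¹)) 0) μ)
    (hBint : Integrable (fun x => max (Real.log (opNorm (B x))) 0) μ)
    (lam : ℝ)
    (hA₁lim : ∀ᵐ x ∂μ,
      Tendsto (fun n : ℕ => Real.log (opNorm
          (cocycle T (fun y => (A₁ y : Matrix (Fin d₁) (Fin d₁) ℝ)) n x)) / n) atTop (nhds lam) ∧
      Tendsto (fun n : ℕ => Real.log (opNorm
          (cocycle T (fun y => (A₁ y : Matrix (Fin d₁) (Fin d₁) ℝ)) n x)⁻¹) / n) atTop (nhds (-lam)))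
    (hA₂lim : ∀ᵐ x ∂μ,
      Tendsto (fun n : ℕ => Real.log (opNorm
          (cocycle T (fun y => (A₂ y : Matrix (Fin d₂) (Fin d₂) ℝ)) n x)) / n) atTop (nhds lam) ∧
      Tendsto (fun n : ℕ => Real.log (opNorm
          (cocycle T (fun y => (A₂ y : Matrix (Fin d₂) (Fin d₂) ℝ)) n x)⁻¹) / n) atTop (nhds (-lam))) :
    ∀ᵐ x ∂μ,
      Tendsto (fun n : ℕ => Real.log (opNorm
          (cocycle T (fun y => Matrix.fromBlocks
            (A₁ y : Matrix (Fin d₁) (Fin d₁) ℝ) (B y) 0 (A₂ y : Matrix (Fin d₂) (Fin d₂) ℝ)) n x)) / n)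
        atTop (nhds lam) ∧
      Tendsto (fun n : ℕ => Real.log (opNorm
          (cocycle T (fun y => Matrix.fromBlocks
            (A₁ y : Matrix (Fin d₁) (Fin d₁) ℝ) (B y) 0 (A₂ y : Matrix (Fin d₂) (Fin d₂) ℝ)) n x)⁻¹) / n)
        atTop (nhds (-lam)) := by
  haveI : Nonempty (Fin d₁) := ⟨⟨0, hd₁⟩⟩
  haveI : Nonempty (Fin d₂) := ⟨⟨0, hd₂⟩⟩
  have hg : Measurable fun y => max (Real.log (opNorm (B y))) 0 := by
    have hco : Measurable (fun A : Matrix (Fin d₁) (Fin d₂) ℝ => opNorm A) :=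
      continuous_opNorm.measurable
    exact ((Real.measurable_log.comp (hco.comp hBm)).max measurable_const)
  have horb := orbit_sublinear μ hErg.toMeasurePreserving hg
    (fun y => le_max_right _ _) hBint
  filter_upwards [hA₁lim, hA₂lim, horb] with x hx1 hx2 hx3
  exact det_main T (fun y => (A₁ y : Matrix (Fin d₁) (Fin d₁) ℝ))
    (fun y => (A₂ y : Matrix (Fin d₂) (Fin d₂) ℝ)) B
    (fun y => (A₁ y).isUnit) (fun y => (A₂ y).isUnit) lam x
    hx1.1 hx1.2 hx2.1 hx2.2 hx3
end
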